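/- arXiv:2404.15356 — 6 statements merged into one kernel-verified Lean document; each statement's English description precedes it below -/
import Mathlib

section
/- Let Q = lcm(p−1, P(f)). Then the determinant of the banded Toeplitz matrix is periodic in the order n with period Q: for every n ≥ L+R, det(M_{n+Q}) = det(M_n). -/
open Polynomial Matrix

section aux
variable {α : Type} [CommRing α]

/-- augmented Sylvester-like matrix -/
def Sm (L R : ℕ) (c : ℤ → α) (m : ℕ) : Matrix (Fin (m+(L+R))) (Fin (m+(L+R))) α :=
  Matrix.of fun i j => if (j:ℕ) < L ∨ m + L ≤ (j:ℕ) then (if (i:ℕ) = (j:ℕ) then 1 else 0)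
    else c ((i:ℤ) - (j:ℤ))

def Mc (c : ℤ → α) (m : ℕ) : Matrix (Fin m) (Fin m) α :=
  Matrix.of fun i j => c ((j:ℤ) - (i:ℤ))

theorem detS (L R : ℕ) (c : ℤ → α) (m : ℕ) :
    (Sm L R c m).det = (Mc c m).det := by
  have hdim : L + (m + R) = m + (L + R) := by omega
  set e : Fin L ⊕ (Fin m ⊕ Fin R) ≃ Fin (m + (L + R)) :=
    ((Equiv.sumCongr (Equiv.refl (Fin L)) finSumFinEquiv).trans finSumFinEquiv).trans
      (finCongr hdim) with he
  have ve1 : ∀ a : Fin L, ((e (Sum.inl a)) : ℕ) = (a:ℕ) := by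
    intro a; simp [he]
  have ve2 : ∀ b : Fin m, ((e (Sum.inr (Sum.inl b))) : ℕ) = L + (b:ℕ) := by
    intro b; simp [he]
  have ve3 : ∀ r : Fin R, ((e (Sum.inr (Sum.inr r))) : ℕ) = L + (m + (r:ℕ)) := by
    intro r; simp [he]
  rw [← Matrix.det_submatrix_equiv_self e (Sm L R c m)]
  set A := (Sm L R c m).submatrix e e with hA
  have h21 : A.toBlocks₂₁ = 0 := by
    ext x a
    rcases x with b | r <;>
      simp only [toBlocks₂₁, hA, of_apply, submatrix_apply, Sm, Matrix.zero_apply] <;>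
      [rw [ve2 b, ve1 a]; rw [ve3 r, ve1 a]] <;>
      split_ifs <;> first | rfl | omega
  have h11 : A.toBlocks₁₁ = 1 := by
    ext a a'
    simp only [toBlocks₁₁, hA, of_apply, submatrix_apply, Sm, Matrix.one_apply]
    rw [ve1 a, ve1 a']
    by_cases h : a = a'
    · subst h; simp [a.isLt]
    · have : (a:ℕ) ≠ (a':ℕ) := fun hc => h (Fin.ext hc)
      split_ifs <;> first | rfl | omega
  have hAblocks : A = Matrix.fromBlocks A.toBlocks₁₁ A.toBlocks₁₂ A.toBlocks₂₁ A.toBlocks₂₂ :=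
    (Matrix.fromBlocks_toBlocks A).symm
  rw [hAblocks, h21, h11, Matrix.det_fromBlocks_zero₂₁, Matrix.det_one, one_mul]
  set D := A.toBlocks₂₂ with hD
  have h12 : D.toBlocks₁₂ = 0 := by
    ext b r
    simp only [toBlocks₁₂, hD, toBlocks₂₂, hA, of_apply, submatrix_apply, Sm, Matrix.zero_apply]
    rw [ve2 b, ve3 r]
    split_ifs <;> first | rfl | omega
  have h22 : D.toBlocks₂₂ = 1 := by
    ext r r'
    simp only [toBlocks₂₂, hD, hA, of_apply, submatrix_apply, Sm, Matrix.one_apply]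
    rw [ve3 r, ve3 r']
    by_cases h : r = r'
    · subst h
      have h1 : m + L ≤ L + (m + (r:ℕ)) := by omega
      simp [h1]
    · have : (r:ℕ) ≠ (r':ℕ) := fun hc => h (Fin.ext hc)
      split_ifs <;> first | rfl | omega
  have h11' : D.toBlocks₁₁ = (Mc c m)ᵀ := by
    ext b b'
    simp only [toBlocks₁₁, hD, toBlocks₂₂, hA, of_apply, submatrix_apply, Sm, Mc,
      Matrix.transpose_apply]
    rw [ve2 b, ve2 b']
    have hb : ¬((L + (b':ℕ) < L) ∨ (m + L ≤ L + (b':ℕ))) := by omega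
    rw [if_neg hb]
    congr 1
    push_cast
    ring
  have hDblocks : D = Matrix.fromBlocks D.toBlocks₁₁ D.toBlocks₁₂ D.toBlocks₂₁ D.toBlocks₂₂ :=
    (Matrix.fromBlocks_toBlocks D).symm
  rw [hDblocks, h12, h22, h11', Matrix.det_fromBlocks_zero₁₂, Matrix.det_one, mul_one,
    Matrix.det_transpose]


theorem finRotate_pow_val {N : ℕ} (k : ℕ) (s : Fin (N + 1)) :
    ((((finRotate (N + 1)) ^ k) s : Fin (N + 1)) : ℕ) = ((s : ℕ) + k) % (N + 1) := by
  induction k generalizing s with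
  | zero => simp [Nat.mod_eq_of_lt s.isLt]
  | succ k ih =>
    have h1 : ((finRotate (N + 1)) ^ (k + 1)) s = ((finRotate (N + 1)) ^ k) (finRotate (N + 1) s) := by
      rw [pow_succ]; rfl
    have h2 : ((finRotate (N + 1) s : Fin (N + 1)) : ℕ) = ((s : ℕ) + 1) % (N + 1) := by
      rw [finRotate_succ_apply, Fin.val_add, Fin.val_one']
      conv_rhs => rw [Nat.add_mod ((s:ℕ)) 1 (N+1)]
      rw [Nat.mod_eq_of_lt s.isLt]
    rw [h1, ih, h2, Nat.mod_add_mod, Nat.add_assoc, Nat.add_comm 1 k]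

theorem finRotate_pow_val' {N : ℕ} (hN : 1 ≤ N) (k : ℕ) (s : Fin N) :
    (((finRotate N ^ k) s : Fin N) : ℕ) = ((s : ℕ) + k) % N := by
  cases N with
  | zero => omega
  | succ n => exact finRotate_pow_val k s

def rotPerm (m L R Q : ℕ) (hdim : (m + L) + (R + Q) = m + Q + (L + R)) :
    Equiv.Perm (Fin (m + Q + (L + R))) :=
  Equiv.permCongr (finSumFinEquiv.trans (finCongr hdim))
    (Equiv.sumCongr (Equiv.refl (Fin (m + L))) ((finRotate (R + Q)) ^ Q))

theorem rotPerm_val (m L R Q : ℕ) (hR : 1 ≤ R) (hQ : 1 ≤ Q)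
    (hdim : (m + L) + (R + Q) = m + Q + (L + R)) (j : Fin (m + Q + (L + R))) :
    ((rotPerm m L R Q hdim j : Fin (m + Q + (L + R))) : ℕ) =
      if (j : ℕ) < m + L then (j : ℕ)
      else if (j : ℕ) < m + L + R then (j : ℕ) + Q else (j : ℕ) - R := by
  set emb : Fin (m + L) ⊕ Fin (R + Q) ≃ Fin (m + Q + (L + R)) :=
    finSumFinEquiv.trans (finCongr hdim) with hemb
  have hv1 : ∀ a : Fin (m + L), ((emb (Sum.inl a)) : ℕ) = (a : ℕ) := by intro a; simp [hemb]
  have hv2 : ∀ b : Fin (R + Q), ((emb (Sum.inr b)) : ℕ) = (m + L) + (b : ℕ) := by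
    intro b; simp [hemb]
  obtain ⟨x, rfl⟩ := emb.surjective j
  have happ : rotPerm m L R Q hdim (emb x) =
      emb ((Equiv.sumCongr (Equiv.refl (Fin (m + L))) ((finRotate (R + Q)) ^ Q)) x) := by
    simp [rotPerm, hemb, Equiv.permCongr_apply]
  rw [happ]
  rcases x with a | b
  · rw [Equiv.sumCongr_apply, Sum.map_inl, Equiv.refl_apply, hv1 a]
    rw [if_pos]; exact lt_of_lt_of_le a.isLt (by omega)
  · rw [Equiv.sumCongr_apply, Sum.map_inr, hv2, hv2]
    rw [finRotate_pow_val' (by omega) Q b]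
    have hb := b.isLt
    by_cases h1 : (b : ℕ) < R
    · have : ((b : ℕ) + Q) % (R + Q) = (b : ℕ) + Q := Nat.mod_eq_of_lt (by omega)
      rw [this, if_neg (by omega), if_pos (by omega)]
      omega
    · have h2 : ((b : ℕ) + Q) % (R + Q) = (b : ℕ) - R := by
        rw [Nat.mod_eq_sub_mod (by omega)]
        have : (b : ℕ) + Q - (R + Q) = (b : ℕ) - R := by omega
        rw [this, Nat.mod_eq_of_lt (by omega)]
      rw [h2, if_neg (by omega), if_neg (by omega)]
      omega

theorem rotPerm_sign (m L R Q : ℕ) (hR : 1 ≤ R) (hQ : 1 ≤ Q)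
    (hdim : (m + L) + (R + Q) = m + Q + (L + R)) :
    Equiv.Perm.sign (rotPerm m L R Q hdim) = (-1) ^ ((R + Q - 1) * Q) := by
  rw [rotPerm, Equiv.Perm.sign_permCongr, Equiv.Perm.sign_sumCongr, map_pow]
  have hN : R + Q = (R + Q - 1) + 1 := by omega
  rw [Equiv.Perm.sign_refl, one_mul]
  rw [pow_mul]
  congr 1
  conv_lhs => rw [hN]
  rw [sign_finRotate]
  rw [Nat.add_sub_cancel]

theorem key_sum {α : Type} [CommRing α] (L R : ℕ) (c : ℤ → α)
    (hc0 : ∀ t : ℤ, (t < -(L : ℤ) ∨ (R : ℤ) < t) → c t = 0)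
    (f : α[X]) (cf : ∀ t : ℕ, f.coeff t = c ((t : ℤ) - L))
    (h : α[X]) (N : ℕ) (hN : ∀ v, N ≤ v → h.coeff v = 0) (i : ℕ) :
    (f * h).coeff i = ∑ v ∈ Finset.range N, h.coeff v * c ((i : ℤ) - v - L) := by
  have e1 : (f * h).coeff i = ∑ v ∈ Finset.range (i + 1), h.coeff v * c ((i : ℤ) - v - L) := by
    rw [mul_comm, coeff_mul, Finset.Nat.sum_antidiagonal_eq_sum_range_succ
      (fun a b => h.coeff a * f.coeff b) i]
    refine Finset.sum_congr rfl fun v hv => ?_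
    have hvi : v ≤ i := by
      have := Finset.mem_range.mp hv; omega
    rw [cf (i - v)]
    congr 1
    push_cast [Nat.cast_sub hvi]
    ring
  set F : ℕ → α := fun v => h.coeff v * c ((i : ℤ) - v - L) with hF
  have e2 : ∑ v ∈ Finset.range (i + 1), F v = ∑ v ∈ Finset.range (max (i + 1) N), F v := by
    refine Finset.sum_subset (Finset.range_subset_range.mpr (le_max_left _ _)) fun v _ hv => ?_
    have hvi : i < v := by
      by_contra hcon
      exact hv (Finset.mem_range.mpr (by omega))
    have : c ((i : ℤ) - v - L) = 0 := hc0 _ (Or.inl (by push_cast; omega))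
    simp [hF, this]
  have e3 : ∑ v ∈ Finset.range N, F v = ∑ v ∈ Finset.range (max (i + 1) N), F v := by
    refine Finset.sum_subset (Finset.range_subset_range.mpr (le_max_right _ _)) fun v _ hv => ?_
    have hvN : N ≤ v := by
      by_contra hcon
      exact hv (Finset.mem_range.mpr (by omega))
    simp [hF, hN v hvN]
  rw [e1]
  show ∑ v ∈ Finset.range (i + 1), F v = ∑ v ∈ Finset.range N, F v
  rw [e2, e3]

set_option maxHeartbeats 2000000 in
/-- Over `𝔽_p`, the determinant of the banded Toeplitz matrix `M_n` is periodic
in the order `n` with period `Q = lcm(p - 1, P(f))`: for all `n ≥ L + R`,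
`det M_{n+Q} = det M_n`. -/
theorem banded_toeplitz_det_periodic
    (p : ℕ) [Fact p.Prime] (L R : ℕ) (hL : 1 ≤ L) (hR : 1 ≤ R)
    (c : ℤ → ZMod p) (hcL : c (-(L : ℤ)) ≠ 0) (hcR : c (R : ℤ) ≠ 0)
    (hc0 : ∀ t : ℤ, (t < -(L : ℤ) ∨ (R : ℤ) < t) → c t = 0)
    (f : Polynomial (ZMod p))
    (hf : f = ∑ t ∈ Finset.range (L + R + 1), C (c ((t : ℤ) - (L : ℤ))) * X ^ t)
    (P : ℕ) (hP : IsLeast {q : ℕ | 0 < q ∧ f ∣ (X ^ q - 1)} P)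
    (Q : ℕ) (hQ : Q = Nat.lcm (p - 1) P)
    (M : ∀ n : ℕ, Matrix (Fin n) (Fin n) (ZMod p))
    (hM : ∀ (n : ℕ) (i j : Fin n), M n i j = c ((j : ℤ) - (i : ℤ))) :
    ∀ n : ℕ, L + R ≤ n → (M (n + Q)).det = (M n).det := by
  intro n _hn
  have hp2 : 2 ≤ p := (Fact.out : p.Prime).two_le
  -- coefficients of f
  have cf : ∀ t : ℕ, f.coeff t = c ((t : ℤ) - L) := by
    intro t
    rw [hf, Polynomial.finset_sum_coeff]
    simp only [Polynomial.coeff_C_mul, Polynomial.coeff_X_pow, mul_ite, mul_one, mul_zero]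
    rw [Finset.sum_ite_eq (Finset.range (L + R + 1)) t (fun t' => c ((t' : ℤ) - L))]
    split_ifs with h
    · rfl
    · rw [Finset.mem_range] at h
      exact (hc0 _ (Or.inr (by push_cast; omega))).symm
  have hfd : f.coeff (L + R) = c R := by
    rw [cf]; congr 1; push_cast; ring
  have hf0 : f ≠ 0 := by
    intro h0
    apply hcR
    rw [← hfd, h0, Polynomial.coeff_zero]
  have hdegf : f.natDegree = L + R := by
    apply le_antisymm
    · rw [Polynomial.natDegree_le_iff_coeff_eq_zero]
      intro t ht
      rw [cf]
      exact hc0 _ (Or.inr (by push_cast; omega))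
    · exact Polynomial.le_natDegree_of_ne_zero (by rw [hfd]; exact hcR)
  obtain ⟨⟨hPpos, hfP⟩, _⟩ := hP
  have hQP : P ∣ Q := hQ ▸ Nat.dvd_lcm_right _ _
  have hQp : (p - 1) ∣ Q := hQ ▸ Nat.dvd_lcm_left _ _
  have hQpos : 0 < Q := by
    rw [hQ]
    exact Nat.pos_of_ne_zero (Nat.lcm_ne_zero (by omega) (by omega))
  have hfQ : f ∣ X ^ Q - 1 := by
    obtain ⟨k, hk⟩ := hQP
    refine hfP.trans ?_
    have h1 := sub_dvd_pow_sub_pow (X ^ P : (ZMod p)[X]) 1 k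
    rwa [one_pow, ← pow_mul, ← hk] at h1
  obtain ⟨g, hg⟩ := hfQ
  have hXQ : (X ^ Q - 1 : (ZMod p)[X]) ≠ 0 := by
    intro h0
    have h1 := congrArg (fun q : (ZMod p)[X] => q.coeff Q) h0
    simp only [Polynomial.coeff_sub, Polynomial.coeff_X_pow, if_pos rfl,
      Polynomial.coeff_one, Polynomial.coeff_zero] at h1
    rw [if_neg (by omega : ¬ Q = 0)] at h1
    simp at h1
  have hgne : g ≠ 0 := by
    intro h0
    exact hXQ (by rw [hg, h0, mul_zero])
  have hdeg_sum : f.natDegree + g.natDegree = Q := by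
    rw [← Polynomial.natDegree_mul hf0 hgne, ← hg,
      show (1 : (ZMod p)[X]) = C 1 by simp, Polynomial.natDegree_X_pow_sub_C]
  have hQd : L + R ≤ Q := by omega
  have hgcoeff : ∀ v, Q - (L + R) < v → g.coeff v = 0 := by
    intro v hv
    exact Polynomial.coeff_eq_zero_of_natDegree_lt (by omega)
  have hXcoeff : ∀ β v : ℕ, Q - (L + R) + β < v → (g * X ^ β).coeff v = 0 := by
    intro β v hv
    rw [Polynomial.coeff_mul_X_pow']
    split_ifs with h1
    · exact hgcoeff _ (by omega)
    · rfl
  -- the matrices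
  set S' : Matrix (Fin (n + Q + (L + R))) (Fin (n + Q + (L + R))) (ZMod p) :=
    Matrix.of (fun i j => if n + Q + L ≤ (j : ℕ) then (if (i : ℕ) + Q = (j : ℕ) then 1 else 0)
      else Sm L R c (n + Q) i j) with hS'
  set E : Matrix (Fin (n + Q + (L + R))) (Fin (n + Q + (L + R))) (ZMod p) :=
    Matrix.of (fun j' j => if (j' : ℕ) = (j : ℕ) then 1
      else if n + Q + L ≤ (j : ℕ) ∧ L ≤ (j' : ℕ) then
        -((g * X ^ ((j : ℕ) - Q)).coeff ((j' : ℕ) - L)) else 0) with hE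
  have detE : E.det = 1 := by
    have htri : E.BlockTriangular id := by
      intro j' j hlt
      have hlt' : (j : ℕ) < (j' : ℕ) := hlt
      simp only [hE, Matrix.of_apply]
      rw [if_neg (by omega)]
      split_ifs with h1
      · rw [hXcoeff ((j : ℕ) - Q) ((j' : ℕ) - L) (by
          have := j'.isLt
          omega)]
        ring
      · rfl
    rw [Matrix.det_of_upperTriangular htri]
    have hdiag : ∀ j : Fin (n + Q + (L + R)), E j j = 1 := by
      intro j
      simp [hE]
    simp [hdiag]
  have hSE : Sm L R c (n + Q) * E = S' := by
    ext i j
    rw [Matrix.mul_apply]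
    by_cases hj : n + Q + L ≤ (j : ℕ)
    · -- unit-column case with column operations
      have hjlt := j.isLt
      set β : ℕ := (j : ℕ) - Q with hβ
      set h : (ZMod p)[X] := g * X ^ β with hh
      have hhN : ∀ v, n + Q ≤ v → h.coeff v = 0 := by
        intro v hv
        exact hXcoeff β v (by omega)
      have hE' : ∀ j' : Fin (n + Q + (L + R)), E j' j
          = (if (j' : ℕ) = (j : ℕ) then 1 else 0)
            + (if L ≤ (j' : ℕ) then -(h.coeff ((j' : ℕ) - L)) else 0) := by
        intro j'
        simp only [hE, Matrix.of_apply]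
        by_cases h1 : (j' : ℕ) = (j : ℕ)
        · rw [if_pos h1, if_pos h1, if_pos (by omega)]
          rw [hhN ((j' : ℕ) - L) (by omega)]
          ring
        · rw [if_neg h1, if_neg h1]
          by_cases h2 : L ≤ (j' : ℕ)
          · rw [if_pos (⟨hj, h2⟩ : n + Q + L ≤ (j : ℕ) ∧ L ≤ (j' : ℕ)), if_pos h2, hh, hβ]
            ring
          · rw [if_neg (fun hc => h2 hc.2), if_neg h2]
            ring
      simp only [hE', mul_add]
      rw [Finset.sum_add_distrib]
      have hsum1 : (∑ j' : Fin (n + Q + (L + R)),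
          Sm L R c (n + Q) i j' * (if (j' : ℕ) = (j : ℕ) then 1 else 0))
          = if (i : ℕ) = (j : ℕ) then 1 else 0 := by
        have hpt : ∀ j' : Fin (n + Q + (L + R)),
            Sm L R c (n + Q) i j' * (if (j' : ℕ) = (j : ℕ) then 1 else 0)
            = if j' = j then Sm L R c (n + Q) i j' else 0 := by
          intro j'
          by_cases h1 : j' = j
          · subst h1; simp
          · rw [if_neg (fun hv => h1 (Fin.ext hv)), if_neg h1, mul_zero]
        rw [Finset.sum_congr rfl (fun j' _ => hpt j'), Finset.sum_ite_eq' Finset.univ j,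
          if_pos (Finset.mem_univ j)]
        simp only [Sm, Matrix.of_apply]
        rw [if_pos (Or.inr (by omega : n + Q + L ≤ (j : ℕ)))]
      have hsum2 : (∑ j' : Fin (n + Q + (L + R)),
          Sm L R c (n + Q) i j' * (if L ≤ (j' : ℕ) then -(h.coeff ((j' : ℕ) - L)) else 0))
          = -((f * h).coeff i) := by
        set G : ℕ → ZMod p := fun k =>
          (if k < L ∨ n + Q + L ≤ k then (if (i : ℕ) = k then (1 : ZMod p) else 0)
            else c ((i : ℤ) - (k : ℤ)))
            * (if L ≤ k then -(h.coeff (k - L)) else 0) with hG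
        have hconv : (∑ j' : Fin (n + Q + (L + R)),
            Sm L R c (n + Q) i j' * (if L ≤ (j' : ℕ) then -(h.coeff ((j' : ℕ) - L)) else 0))
            = ∑ k ∈ Finset.range (n + Q + (L + R)), G k := by
          rw [← Fin.sum_univ_eq_sum_range G (n + Q + (L + R))]
          exact Finset.sum_congr rfl (fun j' _ => by simp only [Sm, Matrix.of_apply, hG])
        rw [hconv]
        set H : ℕ → ZMod p := fun k =>
          if L ≤ k ∧ k < n + Q + L then -(h.coeff (k - L) * c ((i : ℤ) - (k : ℤ))) else 0 with hH
        have hGH : ∀ k, G k = H k := by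
          intro k
          simp only [hG, hH]
          by_cases h1 : k < L
          · rw [if_pos (Or.inl h1), if_neg (show ¬ L ≤ k by omega), mul_zero,
              if_neg (show ¬(L ≤ k ∧ k < n + Q + L) by omega)]
          · by_cases h2 : k < n + Q + L
            · rw [if_neg (show ¬(k < L ∨ n + Q + L ≤ k) by omega),
                if_pos (show L ≤ k by omega),
                if_pos (show L ≤ k ∧ k < n + Q + L by omega)]
              ring
            · rw [if_pos (Or.inr (show n + Q + L ≤ k by omega)),
                if_pos (show L ≤ k by omega),
                if_neg (show ¬(L ≤ k ∧ k < n + Q + L) by omega),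
                hhN (k - L) (by omega)]
              simp
        rw [Finset.sum_congr rfl (fun k _ => hGH k)]
        have hsub : (∑ k ∈ Finset.range (n + Q + (L + R)), H k)
            = ∑ k ∈ Finset.range (L + (n + Q)), H k := by
          symm
          apply Finset.sum_subset (Finset.range_subset_range.mpr (by omega))
          intro k _ hk
          rw [Finset.mem_range, not_lt] at hk
          simp only [hH]
          rw [if_neg (by omega)]
        rw [hsub]
        have hz : (∑ k ∈ Finset.Ico 0 L, H k) = 0 := by
          apply Finset.sum_eq_zero
          intro k hk
          rw [Finset.mem_Ico] at hk
          simp only [hH]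
          rw [if_neg (by omega)]
        have hsplit : (∑ k ∈ Finset.range (L + (n + Q)), H k)
            = ∑ v ∈ Finset.range (n + Q), H (L + v) := by
          rw [Finset.range_eq_Ico,
            ← Finset.sum_Ico_consecutive H (by omega : 0 ≤ L) (by omega : L ≤ L + (n + Q)),
            hz, zero_add, Finset.sum_Ico_eq_sum_range]
          simp
        rw [hsplit, key_sum L R c hc0 f cf h (n + Q) hhN i, ← Finset.sum_neg_distrib]
        apply Finset.sum_congr rfl
        intro v hv
        rw [Finset.mem_range] at hv
        simp only [hH]
        rw [if_pos (by omega : L ≤ L + v ∧ L + v < n + Q + L)]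
        rw [show L + v - L = v by omega]
        have harg : (i : ℤ) - ((L + v : ℕ) : ℤ) = (i : ℤ) - (v : ℤ) - (L : ℤ) := by
          push_cast; ring
        rw [harg]
      rw [hsum1, hsum2]
      have hfh : f * h = X ^ (Q + β) - X ^ β := by
        rw [hh, ← mul_assoc, ← hg, sub_mul, one_mul, ← pow_add]
      rw [hfh, Polynomial.coeff_sub, Polynomial.coeff_X_pow, Polynomial.coeff_X_pow]
      simp only [hS', Matrix.of_apply]
      rw [if_pos hj]
      have hQβ : Q + β = (j : ℕ) := by omega
      split_ifs <;> first | ring1 | (exfalso; omega)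
    · -- untouched columns
      have hE' : ∀ j' : Fin (n + Q + (L + R)), E j' j = if j' = j then 1 else 0 := by
        intro j'
        simp only [hE, Matrix.of_apply]
        by_cases h1 : j' = j
        · subst h1; rw [if_pos rfl, if_pos rfl]
        · rw [if_neg (fun hv => h1 (Fin.ext hv)), if_neg (fun hc => hj hc.1), if_neg h1]
      simp only [hE', mul_ite, mul_one, mul_zero]
      rw [Finset.sum_ite_eq' Finset.univ j, if_pos (Finset.mem_univ j)]
      simp only [hS', Matrix.of_apply]
      rw [if_neg hj]
  have detS' : S'.det = (Sm L R c (n + Q)).det := by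
    rw [← hSE, Matrix.det_mul, detE, mul_one]
  have hdim : (n + L) + (R + Q) = n + Q + (L + R) := by omega
  set π := rotPerm n L R Q hdim with hπ
  have hπv : ∀ j : Fin (n + Q + (L + R)), ((π j : Fin (n + Q + (L + R))) : ℕ)
      = if (j : ℕ) < n + L then (j : ℕ)
        else if (j : ℕ) < n + L + R then (j : ℕ) + Q else (j : ℕ) - R :=
    fun j => rotPerm_val n L R Q hR hQpos hdim j
  set ρ : Fin (n + (L + R)) ⊕ Fin Q ≃ Fin (n + Q + (L + R)) :=
    finSumFinEquiv.trans (finCongr (by omega)) with hρ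
  have vρ1 : ∀ x : Fin (n + (L + R)), ((ρ (Sum.inl x)) : ℕ) = (x : ℕ) := by
    intro x; simp [hρ]
  have vρ2 : ∀ b : Fin Q, ((ρ (Sum.inr b)) : ℕ) = n + (L + R) + (b : ℕ) := by
    intro b; simp [hρ]
  set Cb : Matrix (Fin (n + (L + R))) (Fin Q) (ZMod p) :=
    Matrix.of (fun x b => c ((x : ℤ) - ((n : ℤ) + L + b))) with hCb
  set Ub : Matrix (Fin Q) (Fin Q) (ZMod p) :=
    Matrix.of (fun b b' => c ((R : ℤ) + b - b')) with hUb
  have hblocks : S'.submatrix id π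
      = (Matrix.fromBlocks (Sm L R c n) Cb 0 Ub).submatrix ρ.symm ρ.symm := by
    ext i j
    obtain ⟨x, rfl⟩ := ρ.surjective i
    obtain ⟨y, rfl⟩ := ρ.surjective j
    rw [Matrix.submatrix_apply, Matrix.submatrix_apply, Equiv.symm_apply_apply,
      Equiv.symm_apply_apply, id_eq]
    rcases x with x | b <;> rcases y with y | b'
    · have hx := vρ1 x
      have hy := vρ1 y
      have hxlt := x.isLt
      have hylt := y.isLt
      have hπy := hπv (ρ (Sum.inl y))
      rw [hy] at hπy
      have hπlt := (π (ρ (Sum.inl y))).isLt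
      simp only [hS', Matrix.of_apply, Sm, Matrix.fromBlocks_apply₁₁, hπy]
      split_ifs <;> first | rfl | (exfalso; omega) | (congr 1; omega)
    · have hx := vρ1 x
      have hb' := vρ2 b'
      have hxlt := x.isLt
      have hb'lt := b'.isLt
      have hπy := hπv (ρ (Sum.inr b'))
      rw [hb'] at hπy
      simp only [hS', Matrix.of_apply, Sm, Matrix.fromBlocks_apply₁₂, hCb, hπy]
      split_ifs <;> first | rfl | (exfalso; omega) | (congr 1; push_cast; omega)
    · have hb := vρ2 b
      have hy := vρ1 y
      have hblt := b.isLt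
      have hylt := y.isLt
      have hπy := hπv (ρ (Sum.inl y))
      rw [hy] at hπy
      simp only [hS', Matrix.of_apply, Sm, Matrix.fromBlocks_apply₂₁, Matrix.zero_apply, hπy]
      split_ifs <;>
        first
        | rfl
        | (exfalso; omega)
        | (apply hc0; right; push_cast; omega)
    · have hb := vρ2 b
      have hb' := vρ2 b'
      have hblt := b.isLt
      have hb'lt := b'.isLt
      have hπy := hπv (ρ (Sum.inr b'))
      rw [hb'] at hπy
      simp only [hS', Matrix.of_apply, Sm, Matrix.fromBlocks_apply₂₂, hUb, hπy]
      split_ifs <;> first | rfl | (exfalso; omega) | (congr 1; push_cast; omega)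
  have hUdet : Ub.det = (c R) ^ Q := by
    have htri : Ub.BlockTriangular id := by
      intro b b' hlt
      have hlt' : (b' : ℕ) < (b : ℕ) := hlt
      simp only [hUb, Matrix.of_apply]
      apply hc0
      right
      push_cast
      omega
    rw [Matrix.det_of_upperTriangular htri]
    have hdiag : ∀ b : Fin Q, Ub b b = c R := by
      intro b
      simp only [hUb, Matrix.of_apply]
      congr 1
      ring
    rw [Finset.prod_congr rfl (fun b _ => hdiag b)]
    simp [Finset.prod_const, Finset.card_univ]
  have hcR1 : (c R) ^ Q = 1 := by
    obtain ⟨k, hk⟩ := hQp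
    rw [hk, pow_mul, ZMod.pow_card_sub_one_eq_one hcR, one_pow]
  have hcomb := Matrix.det_permute' π S'
  rw [hblocks, Matrix.det_submatrix_equiv_self, Matrix.det_fromBlocks_zero₂₁, hUdet, hcR1,
    mul_one] at hcomb
  -- hcomb : (Sm L R c n).det = ↑↑(sign π) * S'.det
  have hdetSn : S'.det = (Sm L R c n).det := by
    by_cases hp2' : p = 2
    · subst hp2'
      rcases Int.units_eq_one_or (Equiv.Perm.sign π) with hu | hu <;> rw [hu] at hcomb <;>
        simp only [Units.val_one, Units.val_neg, Int.cast_one, Int.cast_neg, one_mul,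
          neg_mul] at hcomb
      · exact hcomb.symm
      · rw [hcomb, CharTwo.neg_eq]
    · have hodd : p % 2 = 1 := ((Fact.out : p.Prime).eq_two_or_odd).resolve_left hp2'
      have h2Q : 2 ∣ Q := dvd_trans (by omega : 2 ∣ p - 1) hQp
      have heven : Even ((R + Q - 1) * Q) := by
        obtain ⟨k, hk⟩ := h2Q
        have hQe : Even Q := ⟨k, by omega⟩
        exact hQe.mul_left _
      have hsπ : Equiv.Perm.sign π = 1 := by
        rw [hπ, rotPerm_sign n L R Q hR hQpos hdim]
        exact heven.neg_one_pow
      rw [hsπ] at hcomb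
      simp only [Units.val_one, Int.cast_one, one_mul] at hcomb
      exact hcomb.symm
  have hMc : ∀ m' : ℕ, M m' = Mc c m' := by
    intro m'
    ext a b
    rw [hM m' a b]
    rfl
  calc (M (n + Q)).det = (Mc c (n + Q)).det := by rw [hMc]
    _ = (Sm L R c (n + Q)).det := (detS L R c (n + Q)).symm
    _ = S'.det := detS'.symm
    _ = (Sm L R c n).det := hdetSn
    _ = (Mc c n).det := detS L R c n
    _ = (M n).det := by rw [hMc]


end aux
end

section
/- Suppose M_n is invertible and set P = P(f). Then for every row index r and column index s with ⌈r/P⌉ + 2 ≤ ⌈s/P⌉ and s ≤ P·⌊n/P⌋ (and 1 ≤ r, s ≤ n), the entries of X = M_n^{-1} satisfy X_{r,s} = X_{r,s−P}. Equivalently, in the partition of M_n^{-1} into P×P blocks B_{I,J} (block B_{I,J} occupying rows (I−1)P+1,…,IP and columns (J−1)P+1,…,JP), one has B_{I,J} = B_{I,J−1} whenever I+2 ≤ J ≤ ⌊n/P⌋. -/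
open Polynomial

/-- The down-shift operator on two-sided sequences. -/
noncomputable def btD (F : Type*) [CommRing F] : Module.End F (ℤ → F) where
  toFun w := fun j => w (j - 1)
  map_add' _ _ := rfl
  map_smul' _ _ := rfl

lemma btD_pow_apply {F : Type*} [CommRing F] (u : ℕ) (w : ℤ → F) (j : ℤ) :
    ((btD F ^ u) w) j = w (j - u) := by
  induction u generalizing w j with
  | zero => simp
  | succ m ih =>
      rw [pow_succ, Module.End.mul_apply, ih]
      show w (j - m - 1) = w (j - (m + 1 : ℕ))
      congr 1
      push_cast
      ring

lemma btD_aeval_apply {F : Type*} [CommRing F] (h : Polynomial F) (w : ℤ → F) (j : ℤ) :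
    (Polynomial.aeval (btD F) h) w j
      = ∑ u ∈ Finset.range (h.natDegree + 1), h.coeff u * w (j - u) := by
  conv_lhs => rw [h.as_sum_range' (h.natDegree + 1) (Nat.lt_succ_self _)]
  rw [map_sum, LinearMap.coe_sum, Finset.sum_apply, Finset.sum_apply]
  refine Finset.sum_congr rfl fun u _ => ?_
  rw [Polynomial.aeval_monomial, Module.End.mul_apply, Module.algebraMap_end_apply,
    Pi.smul_apply, btD_pow_apply, smul_eq_mul]

/-- Zero padding of a one-indexed finite sequence to a two-sided sequence. -/
noncomputable def btPad (n : ℕ) {F : Type*} [Zero F] (v : ℕ → F) : ℤ → F :=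
  fun j => if 1 ≤ j ∧ j ≤ (n : ℤ) then v j.toNat else 0

lemma btPad_pos {n : ℕ} {F : Type*} [Zero F] (v : ℕ → F) {j : ℤ}
    (h1 : 1 ≤ j) (h2 : j ≤ (n : ℤ)) : btPad n v j = v j.toNat :=
  if_pos ⟨h1, h2⟩

lemma btPad_neg {n : ℕ} {F : Type*} [Zero F] (v : ℕ → F) {j : ℤ}
    (h : ¬ (1 ≤ j ∧ j ≤ (n : ℤ))) : btPad n v j = 0 :=
  if_neg h

/-- Horizontal periodicity of the inverse above the diagonal:
`X_{r,s} = X_{r,s-P}` whenever `⌈r/P⌉ + 2 ≤ ⌈s/P⌉` and `s ≤ P⌊n/P⌋`. -/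
theorem banded_toeplitz_inv_block_row_shift
    (p : ℕ) [Fact p.Prime] (L R : ℕ) (hL : 1 ≤ L) (hR : 1 ≤ R)
    (c : ℤ → ZMod p) (hcL : c (-(L : ℤ)) ≠ 0) (hcR : c (R : ℤ) ≠ 0)
    (hc0 : ∀ t : ℤ, (t < -(L : ℤ) ∨ (R : ℤ) < t) → c t = 0)
    (f : Polynomial (ZMod p))
    (hf : f = ∑ t ∈ Finset.range (L + R + 1), C (c ((t : ℤ) - (L : ℤ))) * X ^ t)
    (P : ℕ) (hP : IsLeast {q : ℕ | 0 < q ∧ f ∣ (X ^ q - 1)} P)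
    (n : ℕ) (hn : 1 ≤ n)
    (M : Matrix (Fin n) (Fin n) (ZMod p))
    (hM : ∀ i j : Fin n, M i j = c ((j : ℤ) - (i : ℤ)))
    (hMinv : IsUnit M.det)
    -- `x i j` is the `(i,j)` entry (1-indexed) of `M⁻¹`
    (x : ℕ → ℕ → ZMod p)
    (hx : ∀ (i j : ℕ) (hi : i < n) (hj : j < n), x (i + 1) (j + 1) = M⁻¹ ⟨i, hi⟩ ⟨j, hj⟩) :
    ∀ r s : ℕ, 1 ≤ r → r ≤ n → 1 ≤ s → s ≤ n →
      (r + P - 1) / P + 2 ≤ (s + P - 1) / P → s ≤ P * (n / P) →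
      x r s = x r (s - P) := by
  intro r s hr1 hrn hs1 hsn hblock _
  have hPpos : 0 < P := hP.1.1
  obtain ⟨g, hg⟩ : f ∣ X ^ P - 1 := hP.1.2
  -- basic coefficient facts about f
  have hcoef : ∀ u : ℕ, u ≤ L + R → f.coeff u = c ((u : ℤ) - (L : ℤ)) := by
    intro u hu
    rw [hf, Polynomial.finset_sum_coeff]
    have h1 : ∀ t ∈ Finset.range (L + R + 1),
        (C (c ((t : ℤ) - (L : ℤ))) * X ^ t).coeff u
          = if t = u then c ((t : ℤ) - (L : ℤ)) else 0 := by
      intro t _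
      rw [Polynomial.coeff_C_mul, Polynomial.coeff_X_pow]
      by_cases h : u = t
      · simp [h]
      · simp [h, Ne.symm h]
    rw [Finset.sum_congr rfl h1, Finset.sum_ite_eq']
    simp [Finset.mem_range, Nat.lt_succ_of_le hu]
  have hcoef0 : ∀ u : ℕ, L + R < u → f.coeff u = 0 := by
    intro u hu
    rw [hf, Polynomial.finset_sum_coeff]
    refine Finset.sum_eq_zero fun t ht => ?_
    rw [Polynomial.coeff_C_mul, Polynomial.coeff_X_pow]
    have h2 : ¬ (u = t) := by
      simp only [Finset.mem_range] at ht; omega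
    simp [h2]
  have hcoefLR : f.coeff (L + R) = c (R : ℤ) := by
    rw [hcoef (L + R) le_rfl]
    congr 1
    push_cast
    ring
  have hfne : f ≠ 0 := by
    intro h0
    apply hcR
    rw [← hcoefLR, h0, Polynomial.coeff_zero]
  have hdegf : f.natDegree = L + R := by
    have hle : f.natDegree ≤ L + R :=
      Polynomial.natDegree_le_iff_coeff_eq_zero.mpr fun m hm => hcoef0 m hm
    have hge : L + R ≤ f.natDegree :=
      Polynomial.le_natDegree_of_ne_zero (by rw [hcoefLR]; exact hcR)
    omega
  have hXPdeg : (X ^ P - 1 : (ZMod p)[X]).natDegree = P := by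
    rw [show (X ^ P - 1 : (ZMod p)[X]) = X ^ P - C 1 by rw [map_one],
      Polynomial.natDegree_X_pow_sub_C]
  have hgne : g ≠ 0 := by
    intro h0
    rw [h0, mul_zero] at hg
    rw [hg] at hXPdeg
    simp at hXPdeg
    omega
  have hdeg_sum : L + R + g.natDegree = P := by
    rw [hg, Polynomial.natDegree_mul hfne hgne, hdegf] at hXPdeg
    exact hXPdeg
  -- the zero-padded row sequence
  have ha : ∀ j : ℤ, btPad n (x r) j = if 1 ≤ j ∧ j ≤ (n : ℤ) then x r j.toNat else 0 :=
    fun j => rfl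
  -- the matrix equation for row r
  have hrow : ∀ k : ℕ, 1 ≤ k → k ≤ n →
      ∑ l ∈ Finset.range n, x r (l + 1) * c ((k : ℤ) - ((l : ℤ) + 1))
        = if k = r then 1 else 0 := by
    intro k hk1 hkn
    have hInv : M⁻¹ * M = 1 := Matrix.nonsing_inv_mul M hMinv
    have hr9 : r - 1 < n := by omega
    have hk9 : k - 1 < n := by omega
    have hone : (M⁻¹ * M) ⟨r - 1, hr9⟩ ⟨k - 1, hk9⟩
        = (1 : Matrix (Fin n) (Fin n) (ZMod p)) ⟨r - 1, hr9⟩ ⟨k - 1, hk9⟩ := by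
      rw [hInv]
    rw [Matrix.mul_apply, Matrix.one_apply] at hone
    have hterm : ∀ l : Fin n,
        M⁻¹ ⟨r - 1, hr9⟩ l * M l ⟨k - 1, hk9⟩
          = x r ((l : ℕ) + 1) * c ((k : ℤ) - ((l : ℤ) + 1)) := by
      intro l
      have h1 : x r ((l : ℕ) + 1) = M⁻¹ ⟨r - 1, hr9⟩ l := by
        have h := hx (r - 1) l (by omega) l.isLt
        rw [show r - 1 + 1 = r from by omega] at h
        exact h
      rw [hM l ⟨k - 1, hk9⟩, ← h1]
      congr 2
      show ((k - 1 : ℕ) : ℤ) - (l : ℤ) = (k : ℤ) - ((l : ℤ) + 1)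
      omega
    rw [Finset.sum_congr rfl (fun l _ => hterm l)] at hone
    rw [← Fin.sum_univ_eq_sum_range (fun l => x r (l + 1) * c ((k : ℤ) - ((l : ℤ) + 1))) n]
    rw [hone]
    have hiff : ((⟨r - 1, hr9⟩ : Fin n) = ⟨k - 1, hk9⟩) ↔ (k = r) := by
      rw [Fin.mk.injEq]
      omega
    by_cases h : k = r
    · rw [if_pos (hiff.mpr h), if_pos h]
    · rw [if_neg (fun hh => h (hiff.mp hh)), if_neg h]
  -- the interior homogeneous equations, in operator form
  have hE : ∀ k : ℤ, 1 ≤ k → k ≤ (n : ℤ) → k ≠ (r : ℤ) →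
      (Polynomial.aeval (btD (ZMod p)) f) (btPad n (x r)) (k + L) = 0 := by
    intro k hk1 hkn hkr
    rw [btD_aeval_apply, hdegf]
    have hterm : ∀ u ∈ Finset.range (L + R + 1),
        f.coeff u * btPad n (x r) (k + L - u)
          = btPad n (x r) (k + L - u) * c (k - (k + L - u)) := by
      intro u hu
      simp only [Finset.mem_range] at hu
      rw [hcoef u (by omega), mul_comm]
      congr 2
      push_cast
      ring
    rw [Finset.sum_congr rfl hterm]
    -- reindex as an interval sum
    have hset : Finset.Icc (k - R) (k + L)
        = (Finset.range (L + R + 1)).map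
            ⟨fun u : ℕ => k + L - u, id fun a b hab => by
              simp only [sub_right_inj, Nat.cast_inj] at hab; exact hab⟩ := by
      ext m
      simp only [Finset.mem_Icc, Finset.mem_map, Finset.mem_range,
        Function.Embedding.coeFn_mk]
      constructor
      · rintro ⟨h1, h2⟩
        exact ⟨(k + L - m).toNat, by omega, by omega⟩
      · rintro ⟨u, hu, rfl⟩
        omega
    have step1 : ∑ u ∈ Finset.range (L + R + 1),
          btPad n (x r) (k + L - u) * c (k - (k + L - u))
        = ∑ j ∈ Finset.Icc (k - R) (k + L), btPad n (x r) j * c (k - j) := by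
      rw [hset, Finset.sum_map]
      rfl
    -- extend both interval sums to a common interval
    have step2 : ∑ j ∈ Finset.Icc (k - R) (k + L), btPad n (x r) j * c (k - j)
        = ∑ j ∈ Finset.Icc (min (k - R) 1) (max (k + L) (n : ℤ)),
            btPad n (x r) j * c (k - j) := by
      refine Finset.sum_subset ?_ ?_
      · intro j hj
        simp only [Finset.mem_Icc] at hj ⊢
        omega
      · intro j hj hnot
        simp only [Finset.mem_Icc] at hj hnot
        rw [hc0 (k - j) (by omega), mul_zero]
    have step3 : ∑ j ∈ Finset.Icc (1 : ℤ) (n : ℤ), btPad n (x r) j * c (k - j)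
        = ∑ j ∈ Finset.Icc (min (k - R) 1) (max (k + L) (n : ℤ)),
            btPad n (x r) j * c (k - j) := by
      refine Finset.sum_subset ?_ ?_
      · intro j hj
        simp only [Finset.mem_Icc] at hj ⊢
        omega
      · intro j hj hnot
        simp only [Finset.mem_Icc] at hj hnot
        rw [btPad_neg (x r) (by omega), zero_mul]
    -- identify the interval sum with the matrix equation
    have hset2 : Finset.Icc (1 : ℤ) (n : ℤ)
        = (Finset.range n).map ⟨fun l : ℕ => (l : ℤ) + 1, id fun a b hab => by
              simp only [add_left_inj, Nat.cast_inj] at hab; exact hab⟩ := by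
      ext m
      simp only [Finset.mem_Icc, Finset.mem_map, Finset.mem_range,
        Function.Embedding.coeFn_mk]
      constructor
      · rintro ⟨h1, h2⟩
        exact ⟨(m - 1).toNat, by omega, by omega⟩
      · rintro ⟨u, hu, rfl⟩
        omega
    have step4 : ∑ j ∈ Finset.Icc (1 : ℤ) (n : ℤ), btPad n (x r) j * c (k - j)
        = ∑ l ∈ Finset.range n, x r (l + 1) * c ((k.toNat : ℤ) - ((l : ℤ) + 1)) := by
      rw [hset2, Finset.sum_map]
      refine Finset.sum_congr rfl fun l hl => ?_
      simp only [Finset.mem_range] at hl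
      simp only [Function.Embedding.coeFn_mk]
      rw [btPad_pos (x r) (by omega) (by omega)]
      have e1 : ((l : ℤ) + 1).toNat = l + 1 := by omega
      have e2 : ((k.toNat : ℕ) : ℤ) = k := by omega
      rw [e1, e2]
    have hrowk := hrow k.toNat (by omega) (by omega)
    rw [if_neg (by omega)] at hrowk
    rw [step1, step2, ← step3, step4, hrowk]
  -- the inequality s ≥ r + P + 1 from the block-index hypothesis
  have hsge : r + P + 1 ≤ s := by
    have d1 := Nat.div_add_mod (r + P - 1) P
    have d2 := Nat.div_add_mod (s + P - 1) P
    have m1 := Nat.mod_lt (r + P - 1) hPpos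
    have m2 := Nat.mod_lt (s + P - 1) hPpos
    have hmul : P * ((r + P - 1) / P + 2) ≤ P * ((s + P - 1) / P) :=
      Nat.mul_le_mul_left P hblock
    have hexp : P * ((r + P - 1) / P + 2) = P * ((r + P - 1) / P) + 2 * P := by ring
    omega
  -- the key periodicity computation
  have hkey : btPad n (x r) ((s : ℤ) - P) = btPad n (x r) (s : ℤ) := by
    have h1 : (Polynomial.aeval (btD (ZMod p)) (X ^ P - 1 : (ZMod p)[X]))
          (btPad n (x r)) (s : ℤ)
        = btPad n (x r) ((s : ℤ) - P) - btPad n (x r) (s : ℤ) := by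
      rw [map_sub, map_pow, Polynomial.aeval_X, map_one, LinearMap.sub_apply,
        Module.End.one_apply, Pi.sub_apply, btD_pow_apply]
    have h2 : (Polynomial.aeval (btD (ZMod p)) (X ^ P - 1 : (ZMod p)[X]))
          (btPad n (x r)) (s : ℤ) = 0 := by
      rw [hg, mul_comm f g, map_mul, Module.End.mul_apply, btD_aeval_apply]
      refine Finset.sum_eq_zero fun u hu => ?_
      simp only [Finset.mem_range] at hu
      have harg : (s : ℤ) - u = ((s : ℤ) - u - L) + L := by ring
      rw [harg, hE ((s : ℤ) - u - L) (by omega) (by omega) (by omega), mul_zero]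
    rw [h1] at h2
    exact sub_eq_zero.mp h2
  -- translate back to x
  have e1 : btPad n (x r) (s : ℤ) = x r s := by
    rw [btPad_pos (x r) (by omega) (by omega), Int.toNat_natCast]
  have e2 : btPad n (x r) ((s : ℤ) - P) = x r (s - P) := by
    rw [btPad_pos (x r) (by omega) (by omega)]
    congr 1
    omega
  rw [← e1, ← e2, hkey]
end

section
/- Suppose M_n is invertible and set P = P(f). Then for every row index r and column index s with ⌈r/P⌉ + 2 ≤ ⌈s/P⌉ and r ≤ P·(⌊n/P⌋ − 1) (and 1 ≤ r, s ≤ n), the entries of X = M_n^{-1} satisfy X_{r,s} = X_{r+P,s}. Equivalently, in the partition of M_n^{-1} into P×P blocks B_{I,J} (block B_{I,J} occupying rows (I−1)P+1,…,IP and columns (J−1)P+1,…,JP), one has B_{I,J} = B_{I+1,J} whenever I ≤ J−2 and I ≤ ⌊n/P⌋ − 1. -/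
open Polynomial

noncomputable def shiftEnd (p : ℕ) : Module.End (ZMod p) (ℤ → ZMod p) where
  toFun y := fun j => y (j + 1)
  map_add' _ _ := rfl
  map_smul' _ _ := rfl

lemma shiftEnd_pow (p : ℕ) (m : ℕ) (y : ℤ → ZMod p) (j : ℤ) :
    ((shiftEnd p ^ m) y) j = y (j + m) := by
  induction m generalizing y j with
  | zero => simp
  | succ k ih =>
    rw [pow_succ, Module.End.mul_apply]
    have : (shiftEnd p) y = fun j => y (j+1) := rfl
    rw [this, ih]
    push_cast; ring_nf

lemma aeval_shift_apply (p : ℕ) (h : Polynomial (ZMod p)) (y : ℤ → ZMod p) (j : ℤ) :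
    (Polynomial.aeval (shiftEnd p) h) y j
      = ∑ m ∈ Finset.range (h.natDegree + 1), h.coeff m * y (j + m) := by
  rw [Polynomial.aeval_eq_sum_range]
  simp only [LinearMap.coe_sum, Finset.sum_apply, LinearMap.smul_apply, Pi.smul_apply,
    smul_eq_mul, shiftEnd_pow]

/-- Vertical periodicity of the inverse above the diagonal:
`X_{r,s} = X_{r+P,s}` whenever `⌈r/P⌉ + 2 ≤ ⌈s/P⌉` and `r ≤ P(⌊n/P⌋ - 1)`. -/
theorem banded_toeplitz_inv_block_col_shift
    (p : ℕ) [Fact p.Prime] (L R : ℕ) (hL : 1 ≤ L) (hR : 1 ≤ R)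
    (c : ℤ → ZMod p) (hcL : c (-(L : ℤ)) ≠ 0) (hcR : c (R : ℤ) ≠ 0)
    (hc0 : ∀ t : ℤ, (t < -(L : ℤ) ∨ (R : ℤ) < t) → c t = 0)
    (f : Polynomial (ZMod p))
    (hf : f = ∑ t ∈ Finset.range (L + R + 1), C (c ((t : ℤ) - (L : ℤ))) * X ^ t)
    (P : ℕ) (hP : IsLeast {q : ℕ | 0 < q ∧ f ∣ (X ^ q - 1)} P)
    (n : ℕ) (hn : 1 ≤ n)
    (M : Matrix (Fin n) (Fin n) (ZMod p))
    (hM : ∀ i j : Fin n, M i j = c ((j : ℤ) - (i : ℤ)))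
    (hMinv : IsUnit M.det)
    -- `x i j` is the `(i,j)` entry (1-indexed) of `M⁻¹`
    (x : ℕ → ℕ → ZMod p)
    (hx : ∀ (i j : ℕ) (hi : i < n) (hj : j < n), x (i + 1) (j + 1) = M⁻¹ ⟨i, hi⟩ ⟨j, hj⟩) :
    ∀ r s : ℕ, 1 ≤ r → r ≤ n → 1 ≤ s → s ≤ n →
      (r + P - 1) / P + 2 ≤ (s + P - 1) / P → r ≤ P * (n / P - 1) →
      x r s = x (r + P) s := by
  intro r s hr1 hrn hs1 hsn hceil hrfloor
  have hP0 : 0 < P := hP.1.1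
  -- r + P ≤ n
  have hrPn : r + P ≤ n := by
    have hq : P * (n / P) ≤ n := Nat.mul_div_le n P
    rcases Nat.eq_zero_or_pos (n / P) with h0 | h0
    · rw [h0] at hrfloor; simp at hrfloor; omega
    · have h1 : P * (n / P - 1 + 1) = P * (n / P) := by congr 1; omega
      rw [Nat.mul_add, Nat.mul_one] at h1
      omega
  -- r + P < s
  have hkey : r + P < s := by
    have h1 : P * ((r+P-1)/P) + (r+P-1) % P = r+P-1 := Nat.div_add_mod _ _
    have h2 : P * ((s+P-1)/P) + (s+P-1) % P = s+P-1 := Nat.div_add_mod _ _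
    have h3 : (r+P-1) % P < P := Nat.mod_lt _ hP0
    have h4 : (s+P-1) % P < P := Nat.mod_lt _ hP0
    have h5 : P * ((r+P-1)/P) + P * 2 ≤ P * ((s+P-1)/P) := by
      rw [← Nat.mul_add]; exact Nat.mul_le_mul_left P hceil
    generalize (r+P-1) % P = m1 at h1 h3
    generalize (s+P-1) % P = m2 at h2 h4
    generalize P * ((r+P-1)/P) = A at h1 h5
    generalize P * ((s+P-1)/P) = B at h2 h5
    omega
  -- coefficients of f
  have hfc : ∀ u : ℕ, f.coeff u = c ((u:ℤ) - L) := by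
    intro u
    rw [hf, Polynomial.finset_sum_coeff]
    simp only [Polynomial.coeff_C_mul, Polynomial.coeff_X_pow, mul_ite, mul_one, mul_zero]
    rw [Finset.sum_ite_eq (Finset.range (L+R+1)) u (fun t => c ((t:ℤ) - L))]
    by_cases hu : u ∈ Finset.range (L+R+1)
    · rw [if_pos hu]
    · rw [if_neg hu]
      refine (hc0 _ (Or.inr ?_)).symm
      simp only [Finset.mem_range] at hu
      omega
  have hfLR : f.coeff (L + R) = c (R : ℤ) := by
    rw [hfc]; congr 1; push_cast; ring
  have hfne : f ≠ 0 := by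
    intro h
    rw [h] at hfLR
    simp at hfLR
    exact hcR hfLR.symm
  have hfdeg : f.natDegree = L + R := by
    apply le_antisymm
    · rw [Polynomial.natDegree_le_iff_coeff_eq_zero]
      intro m hm
      rw [hfc]
      exact hc0 _ (Or.inr (by omega))
    · apply Polynomial.le_natDegree_of_ne_zero
      rw [hfLR]; exact hcR
  obtain ⟨g, hg⟩ := hP.1.2
  have hXP : (X ^ P - 1 : Polynomial (ZMod p)).natDegree = P := by
    rw [show (1 : Polynomial (ZMod p)) = C 1 from (Polynomial.C_1).symm]
    exact Polynomial.natDegree_X_pow_sub_C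
  have hgne : g ≠ 0 := by
    intro h
    rw [h, mul_zero] at hg
    have h2 : (X ^ P - 1 : Polynomial (ZMod p)).coeff 0 = 0 := by rw [hg]; simp
    rw [Polynomial.coeff_sub, Polynomial.coeff_X_pow, Polynomial.coeff_one] at h2
    rw [if_neg (by omega : ¬ (0 = P)), if_pos rfl] at h2
    simp at h2
  have hdeg : L + R + g.natDegree = P := by
    have := Polynomial.natDegree_mul hfne hgne
    rw [← hg, hXP, hfdeg] at this
    omega
  -- the extended column sequence
  have hs1' : s - 1 < n := by omega
  have hx' : ∀ (i : ℕ) (hi : i < n), x (i+1) s = M⁻¹ ⟨i, hi⟩ ⟨s-1, hs1'⟩ := by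
    intro i hi
    have h := hx i (s-1) hi hs1'
    rwa [show s - 1 + 1 = s from by omega] at h
  set y : ℤ → ZMod p := fun j => if 1 ≤ j ∧ j ≤ (n:ℤ) then x j.toNat s else 0 with hy
  have hyM : ∀ k : Fin n, y ((k:ℤ) + 1) = M⁻¹ k ⟨s-1, hs1'⟩ := by
    intro k
    have hk := k.isLt
    have hcond : (1:ℤ) ≤ (k:ℤ) + 1 ∧ (k:ℤ) + 1 ≤ (n:ℤ) := ⟨by omega, by push_cast; omega⟩
    simp only [hy]
    rw [if_pos hcond]
    have ht : ((k:ℤ)+1).toNat = (k:ℕ) + 1 := by omega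
    rw [ht, hx' (k:ℕ) hk]
  have hy0 : ∀ j : ℤ, j < 1 ∨ (n:ℤ) < j → y j = 0 := by
    intro j hj
    simp only [hy]
    rw [if_neg (by omega)]
  have hyx : ∀ j : ℕ, 1 ≤ j → j ≤ n → y (j:ℤ) = x j s := by
    intro j h1 h2
    simp only [hy]
    rw [if_pos ⟨by omega, by omega⟩]
    congr 1
  -- the recurrence: F m = 0 away from the diagonal
  set F : ℤ → ZMod p := (Polynomial.aeval (shiftEnd p) f) y with hF
  have hFzero : ∀ m : ℤ, 1 ≤ m + L → m + L ≤ (n:ℤ) → m + L ≠ (s:ℤ) → F m = 0 := by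
    intro m hm1 hm2 hm3
    have hi0 : (m + L - 1).toNat < n := by omega
    have hi0v : (((m + L - 1).toNat : ℕ) : ℤ) = m + L - 1 := by omega
    -- row equation from M * M⁻¹ = 1
    have hrow : ∑ k : Fin n, c (((k:ℤ) + 1) - (m + L)) * y ((k:ℤ) + 1) = 0 := by
      have hMM := Matrix.mul_nonsing_inv M hMinv
      have h := congrFun (congrFun hMM ⟨(m + L - 1).toNat, hi0⟩) ⟨s-1, hs1'⟩
      rw [Matrix.mul_apply, Matrix.one_apply_ne (by
        intro hcon
        have := congrArg Fin.val hcon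
        simp only at this
        omega)] at h
      rw [← h]
      apply Finset.sum_congr rfl
      intro k _
      rw [hM, hyM k]
      congr 2
      show (k:ℤ) + 1 - (m + L) = (k:ℤ) - (((m + L - 1).toNat : ℕ) : ℤ)
      rw [hi0v]
      ring
    -- rewrite both sums as sums over integer intervals
    have hS1 : ∑ k : Fin n, c (((k:ℤ) + 1) - (m + L)) * y ((k:ℤ) + 1)
        = ∑ v ∈ Finset.Icc (1:ℤ) n, c (v - (m + L)) * y v := by
      refine Finset.sum_nbij' (fun k : Fin n => (k:ℤ) + 1)
        (fun v : ℤ => (⟨min (v-1).toNat (n-1), by omega⟩ : Fin n)) ?_ ?_ ?_ ?_ ?_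
      · intro k _
        simp only [Finset.mem_Icc]
        have := k.isLt
        refine ⟨by omega, by push_cast; omega⟩
      · intro v hv
        exact Finset.mem_univ _
      · intro k _
        have := k.isLt
        apply Fin.ext
        simp only
        omega
      · intro v hv
        simp only [Finset.mem_Icc] at hv
        push_cast
        omega
      · intro k _
        rfl
    have hS2 : F m = ∑ v ∈ Finset.Icc m (m + L + R), c (v - (m + L)) * y v := by
      rw [hF, aeval_shift_apply, hfdeg]
      refine Finset.sum_nbij' (fun u : ℕ => m + (u:ℤ)) (fun v : ℤ => (v - m).toNat)
        ?_ ?_ ?_ ?_ ?_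
      · intro u hu
        simp only [Finset.mem_range] at hu
        simp only [Finset.mem_Icc]
        omega
      · intro v hv
        simp only [Finset.mem_Icc] at hv
        simp only [Finset.mem_range]
        omega
      · intro u _
        beta_reduce
        omega
      · intro v hv
        simp only [Finset.mem_Icc] at hv
        beta_reduce
        omega
      · intro u _
        rw [hfc]
        congr 2
        ring
    have hU : ∑ v ∈ Finset.Icc (1:ℤ) n, c (v - (m + L)) * y v
        = ∑ v ∈ Finset.Icc m (m + L + R), c (v - (m + L)) * y v := by
      have h1 : ∑ v ∈ Finset.Icc (1:ℤ) n, c (v - (m + L)) * y v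
          = ∑ v ∈ Finset.Icc (1:ℤ) n ∪ Finset.Icc m (m + L + R), c (v - (m + L)) * y v := by
        apply Finset.sum_subset Finset.subset_union_left
        intro v hv hnv
        simp only [Finset.mem_union, Finset.mem_Icc] at hv hnv
        rw [hy0 v (by omega), mul_zero]
      have h2 : ∑ v ∈ Finset.Icc m (m + L + R), c (v - (m + L)) * y v
          = ∑ v ∈ Finset.Icc (1:ℤ) n ∪ Finset.Icc m (m + L + R), c (v - (m + L)) * y v := by
        apply Finset.sum_subset Finset.subset_union_right
        intro v hv hnv
        simp only [Finset.mem_union, Finset.mem_Icc] at hv hnv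
        rw [hc0 (v - (m + L)) (by omega), zero_mul]
      rw [h1, h2]
    rw [hS2, ← hU, ← hS1, hrow]
  -- main computation
  have hmain : y ((r:ℤ) + P) - y (r:ℤ) = 0 := by
    have e1 : (Polynomial.aeval (shiftEnd p) (X ^ P - 1 : Polynomial (ZMod p))) y (r:ℤ)
        = y ((r:ℤ) + P) - y (r:ℤ) := by
      rw [map_sub, map_pow, Polynomial.aeval_X, map_one]
      rw [LinearMap.sub_apply]
      simp only [Pi.sub_apply, Module.End.one_apply, shiftEnd_pow]
    have e2 : (Polynomial.aeval (shiftEnd p) (X ^ P - 1 : Polynomial (ZMod p))) y (r:ℤ) = 0 := by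
      rw [hg, mul_comm f g, map_mul, Module.End.mul_apply]
      rw [show (Polynomial.aeval (shiftEnd p) f) y = F from rfl]
      rw [aeval_shift_apply]
      apply Finset.sum_eq_zero
      intro k hk
      simp only [Finset.mem_range] at hk
      rw [hFzero ((r:ℤ) + k) (by push_cast; omega) (by push_cast; omega)
        (by push_cast; omega), mul_zero]
    rw [← e1, e2]
  have h1 := hyx r hr1 hrn
  have h2 := hyx (r + P) (by omega) hrPn
  rw [← h1, ← h2]
  rw [sub_eq_zero] at hmain
  rw [← hmain]
  congr 1
end

section
/- Suppose M_n is invertible and set P = P(f), writing X = M_n^{-1}. Then every P×P block of X strictly above the diagonal equals the block B_{1,2}: for all block indices 1 ≤ I < J ≤ ⌊n/P⌋ and all 1 ≤ a, b ≤ P, X_{(I−1)P+a, (J−1)P+b} = X_{a, P+b}. Moreover, if P does not divide n, then for every 1 ≤ I ≤ ⌊n/P⌋, the partial block in block-column ⌈n/P⌉ equals the left n − P⌊n/P⌋ columns of B_{1,2}: X_{(I−1)P+a, P⌊n/P⌋+b} = X_{a, P+b} for all 1 ≤ a ≤ P and 1 ≤ b ≤ n − P⌊n/P⌋. -/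
open Polynomial


lemma key_lemma {K : Type*} [Field K] (n P D ℓ i0 : ℕ)
    (e : ℕ → K) (dd : ℤ → K) (φ γ : K[X])
    (hi0l : 1 ≤ i0) (hi0r : i0 ≤ n)
    (hP : 1 ≤ P) (hℓD : ℓ ≤ D)
    (hmul : φ * γ = X ^ P - 1)
    (hφc : ∀ s : ℕ, φ.coeff s = dd ((s : ℤ) - (ℓ : ℤ)))
    (hγdeg : γ.natDegree + D ≤ P)
    (hband : ∀ t : ℤ, t < -(ℓ : ℤ) → dd t = 0)
    (he0 : ∀ j : ℕ, (j = 0 ∨ n < j) → e j = 0)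
    (hrel : ∀ k : ℕ, 1 ≤ k → k ≤ n →
      ∑ j ∈ Finset.Icc 1 n, dd ((k : ℤ) - (j : ℤ)) * e j = if k = i0 then 1 else 0)
    (m : ℕ) (hm1 : P + 1 ≤ m) (hm2 : m ≤ n + ℓ) :
    e (m - P) - e m = if i0 + ℓ ≤ m then γ.coeff (m - ℓ - i0) else 0 := by
  classical
  set V : K[X] := ∑ j ∈ Finset.range (n + 1), C (e j) * X ^ j with hVdef
  have hV : ∀ b : ℕ, V.coeff b = e b := by
    intro b
    rw [hVdef, finset_sum_coeff]
    simp only [coeff_C_mul, coeff_X_pow, mul_ite, mul_one, mul_zero]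
    rw [Finset.sum_ite_eq (Finset.range (n + 1)) b e]
    by_cases hb : b ∈ Finset.range (n + 1)
    · simp [hb]
    · simp only [hb, if_false]
      exact (he0 b (Or.inr (by simpa using hb))).symm
  set W : K[X] := φ * V with hWdef
  have hW : ∀ m' : ℕ, ℓ + 1 ≤ m' → m' ≤ n + ℓ →
      W.coeff m' = if m' - ℓ = i0 then 1 else 0 := by
    intro m' h1 h2
    have step1 : W.coeff m' = ∑ b ∈ Finset.range (m' + 1),
        dd (((m' : ℤ) - (ℓ : ℤ)) - (b : ℤ)) * e b := by
      rw [hWdef, coeff_mul, Finset.Nat.sum_antidiagonal_eq_sum_range_succ_mk]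
      rw [← Finset.sum_range_reflect (fun b => dd (((m' : ℤ) - (ℓ : ℤ)) - (b : ℤ)) * e b) (m' + 1)]
      apply Finset.sum_congr rfl
      intro k hk
      simp only [Finset.mem_range] at hk
      have hk' : k ≤ m' := by omega
      have harg : m' + 1 - 1 - k = m' - k := by omega
      rw [harg, hφc, hV]
      congr 1
      push_cast [Nat.cast_sub hk']
      ring
    rw [step1]
    have step2 : ∑ b ∈ Finset.range (m' + 1),
        dd (((m' : ℤ) - (ℓ : ℤ)) - (b : ℤ)) * e b
        = ∑ b ∈ Finset.Icc 1 n, dd (((m' : ℤ) - (ℓ : ℤ)) - (b : ℤ)) * e b := by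
      have hsub1 : Finset.range (m' + 1) ⊆ Finset.range (n + m' + 2) := by
        apply Finset.range_subset_range.2; omega
      have hsub2 : Finset.Icc 1 n ⊆ Finset.range (n + m' + 2) := by
        intro b hb; simp only [Finset.mem_Icc] at hb; simp only [Finset.mem_range]; omega
      rw [Finset.sum_subset hsub1, Finset.sum_subset hsub2]
      · intro b hb hb'
        simp only [Finset.mem_Icc, not_and, not_le] at hb'
        have : e b = 0 := by
          apply he0
          by_cases hb1 : 1 ≤ b
          · exact Or.inr (hb' hb1)
          · exact Or.inl (by omega)
        rw [this, mul_zero]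
      · intro b hb hb'
        simp only [Finset.mem_range, not_lt] at hb'
        have : dd (((m' : ℤ) - (ℓ : ℤ)) - (b : ℤ)) = 0 := by
          apply hband; push_cast; omega
        rw [this, zero_mul]
    rw [step2]
    have hcast : ∀ b : ℕ, ((m' - ℓ : ℕ) : ℤ) - (b : ℤ) = ((m' : ℤ) - (ℓ : ℤ)) - (b : ℤ) := by
      intro b; push_cast [Nat.cast_sub (show ℓ ≤ m' by omega)]; ring
    have := hrel (m' - ℓ) (by omega) (by omega)
    rw [← this]
    apply Finset.sum_congr rfl
    intro b _
    rw [hcast b]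
  -- master computation
  have hLHS : e (m - P) - e m = (W * γ).coeff m := by
    have hwv : W * γ = (X ^ P - 1) * V := by
      rw [hWdef]; rw [show φ * V * γ = (φ * γ) * V by ring, hmul]
    rw [hwv, sub_mul, one_mul, coeff_sub]
    have h1 : (X ^ P * V).coeff m = V.coeff (m - P) := by
      have := Polynomial.coeff_X_pow_mul V P (m - P)
      rwa [show m - P + P = m by omega] at this
    rw [h1, hV, hV]
  rw [hLHS]
  have hRHS : (W * γ).coeff m = ∑ b ∈ Finset.range (m + 1), W.coeff (m - b) * γ.coeff b := by
    rw [coeff_mul, Finset.Nat.sum_antidiagonal_eq_sum_range_succ_mk]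
    rw [← Finset.sum_range_reflect (fun b => W.coeff (m - b) * γ.coeff b) (m + 1)]
    apply Finset.sum_congr rfl
    intro k hk
    simp only [Finset.mem_range] at hk
    congr 2 <;> omega
  rw [hRHS]
  have hterm : ∀ b ∈ Finset.range (m + 1), W.coeff (m - b) * γ.coeff b
      = if b = m - ℓ - i0 ∧ i0 + ℓ ≤ m then γ.coeff b else 0 := by
    intro b hb
    simp only [Finset.mem_range] at hb
    by_cases hbig : γ.natDegree < b
    · rw [coeff_eq_zero_of_natDegree_lt hbig]
      simp
    · push_neg at hbig
      have hbP : b + D ≤ P := by omega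
      have h1 : ℓ + 1 ≤ m - b := by omega
      have h2 : m - b ≤ n + ℓ := by omega
      rw [hW _ h1 h2]
      by_cases heq : m - b - ℓ = i0
      · have hc : b = m - ℓ - i0 ∧ i0 + ℓ ≤ m := by omega
        rw [if_pos heq, if_pos hc, one_mul]
      · have hc : ¬(b = m - ℓ - i0 ∧ i0 + ℓ ≤ m) := by omega
        rw [if_neg heq, if_neg hc, zero_mul]
  rw [Finset.sum_congr rfl hterm]
  by_cases hc : i0 + ℓ ≤ m
  · simp only [hc, and_true]
    rw [Finset.sum_ite_eq' (Finset.range (m + 1)) (m - ℓ - i0) (fun b => γ.coeff b)]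
    have : m - ℓ - i0 ∈ Finset.range (m + 1) := by simp only [Finset.mem_range]; omega
    simp [this, hc]
  · simp only [hc, and_false, if_false]
    simp [Finset.sum_const_zero, hc]

lemma sum_fin_Icc {K : Type*} [AddCommMonoid K] (n : ℕ) (F : ℕ → K) :
    ∑ j : Fin n, F ((j : ℕ) + 1) = ∑ j ∈ Finset.Icc 1 n, F j := by
  rw [Fin.sum_univ_eq_sum_range (fun j => F (j + 1)) n]
  apply Finset.sum_bij' (fun (k : ℕ) _ => k + 1) (fun (k : ℕ) _ => k - 1)
  · intro a ha; simp only [Finset.mem_range] at ha; simp only [Finset.mem_Icc]; omega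
  · intro a ha; simp only [Finset.mem_Icc] at ha; simp only [Finset.mem_range]; omega
  · intro a ha; omega
  · intro a ha; simp only [Finset.mem_Icc] at ha; omega
  · intro a _; rfl


/-- All `P×P` blocks of `M_n⁻¹` strictly above the diagonal equal `B_{1,2}`,
and the partial blocks in the last block-column equal the left
`n - P⌊n/P⌋` columns of `B_{1,2}`. -/
theorem banded_toeplitz_inv_blocks_above_diagonal
    (p : ℕ) [Fact p.Prime] (L R : ℕ) (hL : 1 ≤ L) (hR : 1 ≤ R)
    (c : ℤ → ZMod p) (hcL : c (-(L : ℤ)) ≠ 0) (hcR : c (R : ℤ) ≠ 0)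
    (hc0 : ∀ t : ℤ, (t < -(L : ℤ) ∨ (R : ℤ) < t) → c t = 0)
    (f : Polynomial (ZMod p))
    (hf : f = ∑ t ∈ Finset.range (L + R + 1), C (c ((t : ℤ) - (L : ℤ))) * X ^ t)
    (P : ℕ) (hP : IsLeast {q : ℕ | 0 < q ∧ f ∣ (X ^ q - 1)} P)
    (n : ℕ) (hn : 1 ≤ n)
    (M : Matrix (Fin n) (Fin n) (ZMod p))
    (hM : ∀ i j : Fin n, M i j = c ((j : ℤ) - (i : ℤ)))
    (hMinv : IsUnit M.det)
    -- `x i j` is the `(i,j)` entry (1-indexed) of `M⁻¹`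
    (x : ℕ → ℕ → ZMod p)
    (hx : ∀ (i j : ℕ) (hi : i < n) (hj : j < n), x (i + 1) (j + 1) = M⁻¹ ⟨i, hi⟩ ⟨j, hj⟩) :
    (∀ I J a b : ℕ, 1 ≤ I → I < J → J ≤ n / P → 1 ≤ a → a ≤ P → 1 ≤ b → b ≤ P →
      x ((I - 1) * P + a) ((J - 1) * P + b) = x a (P + b)) ∧
    (¬ P ∣ n → ∀ I a b : ℕ, 1 ≤ I → I ≤ n / P → 1 ≤ a → a ≤ P →
      1 ≤ b → b ≤ n - P * (n / P) →
      x ((I - 1) * P + a) (P * (n / P) + b) = x a (P + b)) := by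
  classical
  obtain ⟨⟨hPpos, hfdvd⟩, -⟩ := hP
  set D := L + R with hD
  -- coefficients of f
  have hfc : ∀ s : ℕ, f.coeff s = c ((s : ℤ) - (L : ℤ)) := by
    intro s
    rw [hf, finset_sum_coeff]
    simp only [coeff_C_mul, coeff_X_pow, mul_ite, mul_one, mul_zero]
    rw [Finset.sum_ite_eq (Finset.range (L + R + 1)) s (fun t => c ((t : ℤ) - (L : ℤ)))]
    by_cases hs : s ∈ Finset.range (L + R + 1)
    · simp [hs]
    · simp only [hs, if_false]
      symm; apply hc0; right
      simp only [Finset.mem_range, not_lt] at hs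
      push_cast; omega
  have hfD : f.coeff D = c (R : ℤ) := by
    rw [hfc]; congr 1; push_cast [hD]; omega
  have hfne : f ≠ 0 := by
    intro h; apply hcR; rw [← hfD, h, coeff_zero]
  have hfdeg : f.natDegree = D := by
    apply le_antisymm
    · rw [Polynomial.natDegree_le_iff_coeff_eq_zero]
      intro N hN; rw [hfc]; apply hc0; right; push_cast; omega
    · apply le_natDegree_of_ne_zero; rw [hfD]; exact hcR
  obtain ⟨g, hg⟩ := hfdvd
  have hXP : (X ^ P - 1 : (ZMod p)[X]).natDegree = P := by
    have := Polynomial.natDegree_X_pow_sub_C (R := ZMod p) (n := P) (r := (1 : ZMod p))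
    simpa using this
  have hXPne : (X ^ P - 1 : (ZMod p)[X]) ≠ 0 := by
    intro h; rw [h] at hXP; simp only [natDegree_zero] at hXP; omega
  have hgne : g ≠ 0 := by
    intro h; rw [h, mul_zero] at hg; exact hXPne hg
  have hgdeg : g.natDegree = P - D := by
    have h1 := natDegree_mul hfne hgne
    rw [← hg, hXP, hfdeg] at h1
    omega
  have hgD : g.natDegree + D ≤ P := by
    have h1 := natDegree_mul hfne hgne
    rw [← hg, hXP, hfdeg] at h1
    omega
  have hDP : D ≤ P := by omega
  -- reverse polynomials
  have hfrev_coeff : ∀ s : ℕ, f.reverse.coeff s = c ((R : ℤ) - (s : ℤ)) := by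
    intro s
    rw [coeff_reverse, hfdeg]
    by_cases hs : s ≤ D
    · rw [revAt_le hs, hfc]
      congr 1
      push_cast [Nat.cast_sub hs, hD]
      omega
    · rw [revAt_eq_self_of_lt (by omega), hfc]
      have h1 : c ((s : ℤ) - (L : ℤ)) = 0 := hc0 _ (Or.inr (by push_cast; omega))
      have h2 : c ((R : ℤ) - (s : ℤ)) = 0 := hc0 _ (Or.inl (by push_cast; omega))
      rw [h1, h2]
  have hrevmul : f.reverse * (-(g.reverse)) = X ^ P - 1 := by
    have h1 : (X ^ P - 1 : (ZMod p)[X]).reverse = 1 - X ^ P := by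
      unfold Polynomial.reverse
      rw [hXP]
      rw [show (X ^ P - 1 : (ZMod p)[X]) = X ^ P - X ^ 0 by rw [pow_zero]]
      rw [reflect_sub, reflect_monomial, reflect_monomial, revAt_le (le_refl P),
        revAt_le (Nat.zero_le P)]
      simp
    have h2 := reverse_mul_of_domain f g
    rw [← hg, h1] at h2
    linear_combination h2
  have hgrevdeg : (-(g.reverse)).natDegree + D ≤ P := by
    rw [natDegree_neg]
    have := g.reverse_natDegree_le
    omega
  -- the zero-extended inverse matrix entries
  set E : ℕ → ℕ → ZMod p := fun i j =>
    if h : 1 ≤ i ∧ i ≤ n ∧ 1 ≤ j ∧ j ≤ n then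
      M⁻¹ ⟨i - 1, by omega⟩ ⟨j - 1, by omega⟩ else 0 with hE
  have hE0 : ∀ i j : ℕ, ¬(1 ≤ i ∧ i ≤ n ∧ 1 ≤ j ∧ j ≤ n) → E i j = 0 := by
    intro i j h
    simp only [hE]
    rw [dif_neg h]
  have hEval : ∀ i j : ℕ, (h : 1 ≤ i ∧ i ≤ n ∧ 1 ≤ j ∧ j ≤ n) →
      E i j = M⁻¹ ⟨i - 1, by omega⟩ ⟨j - 1, by omega⟩ := by
    intro i j h
    simp only [hE]
    rw [dif_pos h]
  have hxE : ∀ i j : ℕ, 1 ≤ i → i ≤ n → 1 ≤ j → j ≤ n → x i j = E i j := by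
    intro i j h1 h2 h3 h4
    have h5 := hx (i - 1) (j - 1) (by omega) (by omega)
    rw [show i - 1 + 1 = i by omega, show j - 1 + 1 = j by omega] at h5
    rw [h5, hEval i j ⟨h1, h2, h3, h4⟩]
  -- matrix relations
  have hrelrow : ∀ i : ℕ, 1 ≤ i → i ≤ n → ∀ k : ℕ, 1 ≤ k → k ≤ n →
      ∑ j ∈ Finset.Icc 1 n, c ((k : ℤ) - (j : ℤ)) * E i j = if k = i then 1 else 0 := by
    intro i hi1 hi2 k hk1 hk2
    have h0 : M⁻¹ * M = 1 := Matrix.nonsing_inv_mul M hMinv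
    have h1 : (M⁻¹ * M) ⟨i - 1, by omega⟩ ⟨k - 1, by omega⟩
        = (1 : Matrix (Fin n) (Fin n) (ZMod p)) ⟨i - 1, by omega⟩ ⟨k - 1, by omega⟩ := by
      rw [h0]
    rw [Matrix.mul_apply, Matrix.one_apply] at h1
    have h2 : ∀ jj : Fin n, M⁻¹ ⟨i - 1, by omega⟩ jj * M jj ⟨k - 1, by omega⟩
        = c ((k : ℤ) - (((jj : ℕ) + 1 : ℕ) : ℤ)) * E i ((jj : ℕ) + 1) := by
      intro jj
      rw [hM, hEval i ((jj : ℕ) + 1) ⟨hi1, hi2, by omega, by omega⟩]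
      have hfin : (⟨(jj : ℕ) + 1 - 1, by omega⟩ : Fin n) = jj := by
        apply Fin.ext; simp
      rw [hfin]
      rw [mul_comm]
      congr 2
      push_cast [Nat.cast_sub hk1]
      omega
    rw [Finset.sum_congr rfl (fun jj _ => h2 jj)] at h1
    rw [sum_fin_Icc n (fun j => c ((k : ℤ) - (j : ℤ)) * E i j)] at h1
    rw [h1]
    have : ((⟨i - 1, by omega⟩ : Fin n) = ⟨k - 1, by omega⟩) ↔ (k = i) := by
      rw [Fin.mk.injEq]; constructor <;> intro <;> omega
    by_cases hik : k = i
    · rw [if_pos (this.mpr hik), if_pos hik]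
    · rw [if_neg (fun hh => hik (this.mp hh)), if_neg hik]
  have hrelcol : ∀ j : ℕ, 1 ≤ j → j ≤ n → ∀ k : ℕ, 1 ≤ k → k ≤ n →
      ∑ i ∈ Finset.Icc 1 n, c ((i : ℤ) - (k : ℤ)) * E i j = if k = j then 1 else 0 := by
    intro j hj1 hj2 k hk1 hk2
    have h0 : M * M⁻¹ = 1 := Matrix.mul_nonsing_inv M hMinv
    have h1 : (M * M⁻¹) ⟨k - 1, by omega⟩ ⟨j - 1, by omega⟩
        = (1 : Matrix (Fin n) (Fin n) (ZMod p)) ⟨k - 1, by omega⟩ ⟨j - 1, by omega⟩ := by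
      rw [h0]
    rw [Matrix.mul_apply, Matrix.one_apply] at h1
    have h2 : ∀ ii : Fin n, M ⟨k - 1, by omega⟩ ii * M⁻¹ ii ⟨j - 1, by omega⟩
        = c ((((ii : ℕ) + 1 : ℕ) : ℤ) - (k : ℤ)) * E ((ii : ℕ) + 1) j := by
      intro ii
      rw [hM, hEval ((ii : ℕ) + 1) j ⟨by omega, by omega, hj1, hj2⟩]
      have hfin : (⟨(ii : ℕ) + 1 - 1, by omega⟩ : Fin n) = ii := by
        apply Fin.ext; simp
      rw [hfin]
      congr 2
      push_cast [Nat.cast_sub hk1]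
      omega
    rw [Finset.sum_congr rfl (fun ii _ => h2 ii)] at h1
    rw [sum_fin_Icc n (fun i => c ((i : ℤ) - (k : ℤ)) * E i j)] at h1
    rw [h1]
    have : ((⟨k - 1, by omega⟩ : Fin n) = ⟨j - 1, by omega⟩) ↔ (k = j) := by
      rw [Fin.mk.injEq]; constructor <;> intro <;> omega
    by_cases hkj : k = j
    · rw [if_pos (this.mpr hkj), if_pos hkj]
    · rw [if_neg (fun hh => hkj (this.mp hh)), if_neg hkj]
  -- key periodicity lemmas
  have rowkey : ∀ i : ℕ, 1 ≤ i → i ≤ n → ∀ m : ℕ, P + 1 ≤ m → m ≤ n + L →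
      E i (m - P) - E i m = if i + L ≤ m then g.coeff (m - L - i) else 0 := by
    intro i h1 h2 m hm1 hm2
    exact key_lemma n P D L i (fun j => E i j) c f g h1 h2 hPpos (by omega) hg.symm
      hfc hgD (fun t ht => hc0 t (Or.inl ht)) (fun j hj => hE0 i j (by omega))
      (hrelrow i h1 h2) m hm1 hm2
  have colkey : ∀ j : ℕ, 1 ≤ j → j ≤ n → ∀ m : ℕ, P + 1 ≤ m → m ≤ n + R →
      E (m - P) j - E m j = if j + R ≤ m then (-(g.reverse)).coeff (m - R - j) else 0 := by
    intro j h1 h2 m hm1 hm2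
    exact key_lemma n P D R j (fun i => E i j) (fun t => c (-t)) f.reverse (-(g.reverse))
      h1 h2 hPpos (by omega) hrevmul
      (fun s => by rw [hfrev_coeff]; congr 1; ring)
      hgrevdeg
      (fun t ht => hc0 (-t) (Or.inr (by omega)))
      (fun i hi => hE0 i j (by omega))
      (fun k hk1 hk2 => by
        have h3 := hrelcol j h1 h2 k hk1 hk2
        rw [← h3]
        apply Finset.sum_congr rfl
        intro i _
        congr 2
        ring) m hm1 hm2
  -- single-step shifts
  have stepcol : ∀ i j : ℕ, 1 ≤ i → i ≤ n → 1 ≤ j → i < j + R → j + P ≤ n →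
      E i j = E i (j + P) := by
    intro i j h1 h2 h3 h4 h5
    have h6 := rowkey i h1 h2 (j + P) (by omega) (by omega)
    rw [show j + P - P = j by omega] at h6
    by_cases hc : i + L ≤ j + P
    · rw [if_pos hc] at h6
      have hz : g.coeff (j + P - L - i) = 0 := by
        apply coeff_eq_zero_of_natDegree_lt
        rw [hgdeg]
        omega
      rw [hz] at h6
      exact sub_eq_zero.mp h6
    · rw [if_neg hc] at h6
      exact sub_eq_zero.mp h6
  have steprow : ∀ i j : ℕ, 1 ≤ i → i + P ≤ n → 1 ≤ j → j ≤ n → i + P < j + R →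
      E i j = E (i + P) j := by
    intro i j h1 h2 h3 h4 h5
    have h6 := colkey j h3 h4 (i + P) (by omega) (by omega)
    rw [show i + P - P = i by omega] at h6
    rw [if_neg (by omega)] at h6
    exact sub_eq_zero.mp h6
  -- iterated reductions
  have colred : ∀ a : ℕ, 1 ≤ a → a ≤ P → ∀ b' : ℕ, 1 ≤ b' → ∀ T : ℕ, 1 ≤ T →
      T * P + b' ≤ n → E a (T * P + b') = E a (P + b') := by
    intro a ha1 ha2 b' hb' T
    induction T with
    | zero => intro h _; omega
    | succ T ih =>
      intro hT1 hTn
      by_cases hT : T = 0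
      · subst hT
        rw [show (0 + 1) * P + b' = P + b' by ring]
      · have h1 : 1 ≤ T := by omega
        have hPle : P ≤ T * P := Nat.le_mul_of_pos_left P (by omega)
        have hexp : (T + 1) * P = T * P + P := by ring
        have hstep : E a (T * P + b') = E a (T * P + b' + P) :=
          stepcol a (T * P + b') ha1 (by omega) (by omega) (by omega) (by omega)
        rw [show (T + 1) * P + b' = T * P + b' + P by ring, ← hstep]
        exact ih h1 (by omega)
  have rowred : ∀ a : ℕ, 1 ≤ a → ∀ j' : ℕ, 1 ≤ j' → j' ≤ n → ∀ T : ℕ,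
      T * P + a ≤ n → T * P + a < j' + R → E (T * P + a) j' = E a j' := by
    intro a ha1 j' hj1 hj2 T
    induction T with
    | zero =>
      intro _ _
      rw [show 0 * P + a = a by ring]
    | succ T ih =>
      intro h1 h2
      have hexp : (T + 1) * P = T * P + P := by ring
      have hstep : E (T * P + a) j' = E (T * P + a + P) j' :=
        steprow (T * P + a) j' (by omega) (by omega) hj1 hj2 (by omega)
      rw [show (T + 1) * P + a = T * P + a + P by ring, ← hstep]
      exact ih (by omega) (by omega)
  -- assembly
  have hKn : (n / P) * P ≤ n := Nat.div_mul_le_self n P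
  constructor
  · intro I J a b hI1 hIJ hJK ha1 ha2 hb1 hb2
    obtain ⟨I', rfl⟩ : ∃ I', I = 1 + I' := ⟨I - 1, by omega⟩
    have hIe : 1 + I' - 1 = I' := by omega
    rw [hIe]
    set Kq := n / P with hKq
    have hJ2 : 2 ≤ J := by omega
    have hJP : J * P ≤ Kq * P := mul_le_mul_left hJK P
    have hJexp : J * P = (J - 1) * P + P := by
      have : J = (J - 1) + 1 := by omega
      calc J * P = ((J - 1) + 1) * P := by rw [← this]
        _ = (J - 1) * P + P := by ring
    have hIJ' : (I' + 1) * P ≤ (J - 1) * P := mul_le_mul_left (by omega) P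
    have hIexp : (I' + 1) * P = I' * P + P := by ring
    -- bounds
    have hcoln : (J - 1) * P + b ≤ n := by omega
    have hrow : E (I' * P + a) ((J - 1) * P + b) = E a ((J - 1) * P + b) :=
      rowred a ha1 ((J - 1) * P + b) (by omega) hcoln I' (by omega) (by omega)
    have hcol : E a ((J - 1) * P + b) = E a (P + b) :=
      colred a ha1 ha2 b hb1 (J - 1) (by omega) hcoln
    have h2P : 2 * P ≤ J * P := mul_le_mul_left hJ2 P
    have h2Pe : 2 * P = P + P := by ring
    rw [hxE (I' * P + a) ((J - 1) * P + b) (by omega) (by omega) (by omega) (by omega)]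
    rw [hxE a (P + b) (by omega) (by omega) (by omega) (by omega)]
    rw [hrow, hcol]
  · intro hdvd I a b hI1 hIK ha1 ha2 hb1 hb2
    obtain ⟨I', rfl⟩ : ∃ I', I = 1 + I' := ⟨I - 1, by omega⟩
    have hIe : 1 + I' - 1 = I' := by omega
    rw [hIe]
    set Kq := n / P with hKq
    have hK1 : 1 ≤ Kq := by omega
    have hPKq : P * Kq = Kq * P := by ring
    have hPKlt : P * Kq < n := by
      rcases Nat.lt_or_ge (P * Kq) n with h | h
      · exact h
      · exfalso
        apply hdvd
        have : P * Kq = n := by omega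
        exact ⟨Kq, this.symm⟩
    have hIP : (I' + 1) * P ≤ Kq * P := mul_le_mul_left (by omega) P
    have hIexp : (I' + 1) * P = I' * P + P := by ring
    have h1P : 1 * P ≤ Kq * P := mul_le_mul_left hK1 P
    have hcoln : P * Kq + b ≤ n := by omega
    have hrow : E (I' * P + a) (P * Kq + b) = E a (P * Kq + b) :=
      rowred a ha1 (P * Kq + b) (by omega) hcoln I' (by omega) (by omega)
    have hcol : E a (P * Kq + b) = E a (P + b) := by
      rw [hPKq]
      exact colred a ha1 ha2 b hb1 Kq hK1 (by omega)
    rw [hxE (I' * P + a) (P * Kq + b) (by omega) (by omega) (by omega) (by omega)]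
    rw [hxE a (P + b) (by omega) (by omega) (by omega) (by omega)]
    rw [hrow, hcol]
end

section
/- Suppose M_n is invertible and set P = P(f), writing X = M_n^{-1}. Then every P×P block of X strictly below the diagonal equals the block B_{2,1}: for all block indices 1 ≤ J < I ≤ ⌊n/P⌋ and all 1 ≤ a, b ≤ P, X_{(I−1)P+a, (J−1)P+b} = X_{P+a, b}. Moreover, if P does not divide n, then for every 1 ≤ J ≤ ⌊n/P⌋, the partial block in block-row ⌈n/P⌉ equals the upper n − P⌊n/P⌋ rows of B_{2,1}: X_{P⌊n/P⌋+a, (J−1)P+b} = X_{P+a, b} for all 1 ≤ a ≤ n − P⌊n/P⌋ and 1 ≤ b ≤ P. -/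
open Polynomial

noncomputable section BTAux

variable {F : Type*} [Field F]

/-- The shift operator on sequences. -/
def shiftE (F : Type*) [Field F] : Module.End F (ℕ → F) where
  toFun v := fun s => v (s + 1)
  map_add' := by intros; rfl
  map_smul' := by intros; rfl

lemma shiftE_pow (m : ℕ) (v : ℕ → F) (s : ℕ) : ((shiftE F ^ m) v) s = v (s + m) := by
  induction m generalizing s with
  | zero => simp
  | succ m ih =>
    rw [pow_succ']
    have : ((shiftE F * shiftE F ^ m) v) s = ((shiftE F ^ m) v) (s + 1) := rfl
    rw [this, ih]
    ring_nf

lemma aeval_shiftE_apply (q : F[X]) (N : ℕ) (hN : q.natDegree < N) (v : ℕ → F) (s : ℕ) :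
    ((Polynomial.aeval (shiftE F) q) v) s = ∑ t ∈ Finset.range N, q.coeff t * v (s + t) := by
  rw [Polynomial.aeval_eq_sum_range' hN]
  rw [LinearMap.sum_apply]
  rw [Finset.sum_apply]
  refine Finset.sum_congr rfl fun t ht => ?_
  rw [LinearMap.smul_apply, Pi.smul_apply, shiftE_pow, smul_eq_mul]

lemma shift_period (P : ℕ) (hP : 0 < P) (g : F[X]) (hg0 : g ≠ 0)
    (hdvd : g ∣ X ^ P - 1) (v : ℕ → F) (s : ℕ)
    (hrec : ∀ k, k ≤ P - g.natDegree → ((Polynomial.aeval (shiftE F) g) v) (s + k) = 0) :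
    v (s + P) = v s := by
  obtain ⟨h, hh⟩ := hdvd
  have hX : (X ^ P - 1 : F[X]) ≠ 0 := by
    have := Polynomial.X_pow_sub_C_ne_zero hP (1 : F)
    simpa using this
  have hh0 : h ≠ 0 := by rintro rfl; rw [mul_zero] at hh; exact hX hh
  have hdegX : (X ^ P - 1 : F[X]).natDegree = P := by
    have := Polynomial.natDegree_X_pow_sub_C (n := P) (r := (1 : F))
    simpa using this
  have hdeg : h.natDegree ≤ P - g.natDegree := by
    have hmul := Polynomial.natDegree_mul hg0 hh0
    rw [← hh, hdegX] at hmul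
    omega
  have e1 : ((Polynomial.aeval (shiftE F) (X ^ P - 1 : F[X])) v) s = v (s + P) - v s := by
    rw [map_sub, map_pow, Polynomial.aeval_X, map_one]
    rw [LinearMap.sub_apply, Pi.sub_apply, shiftE_pow]
    rfl
  have e2 : ((Polynomial.aeval (shiftE F) (X ^ P - 1 : F[X])) v) s = 0 := by
    rw [hh, mul_comm, map_mul]
    rw [Module.End.mul_apply]
    rw [aeval_shiftE_apply h (h.natDegree + 1) (Nat.lt_succ_self _)]
    refine Finset.sum_eq_zero fun k hk => ?_
    rw [hrec k (le_trans (Nat.lt_succ_iff.mp (Finset.mem_range.mp hk)) hdeg), mul_zero]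
  rw [e2] at e1
  exact sub_eq_zero.mp e1.symm

/-- The "band polynomial" with coefficients `c (t - L)` for `t = 0 .. D`. -/
def bandPoly (c : ℤ → F) (L D : ℕ) : F[X] :=
  ∑ t ∈ Finset.range (D + 1), C (c ((t : ℤ) - (L : ℤ))) * X ^ t

lemma bandPoly_coeff (c : ℤ → F) (L D t : ℕ) :
    (bandPoly c L D).coeff t = if t ≤ D then c ((t : ℤ) - (L : ℤ)) else 0 := by
  rw [bandPoly, Polynomial.finset_sum_coeff]
  simp only [Polynomial.coeff_C_mul, Polynomial.coeff_X_pow, mul_ite, mul_one, mul_zero]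
  rw [Finset.sum_ite_eq (Finset.range (D + 1)) t (fun t' => c ((t' : ℤ) - (L : ℤ)))]
  simp only [Finset.mem_range, Nat.lt_succ_iff]

lemma bandPoly_natDegree_le (c : ℤ → F) (L D : ℕ) : (bandPoly c L D).natDegree ≤ D := by
  refine Polynomial.natDegree_le_iff_coeff_eq_zero.mpr fun t ht => ?_
  rw [bandPoly_coeff]
  rw [if_neg (by omega)]

lemma bandPoly_natDegree (c : ℤ → F) (L D : ℕ) (h : c ((D : ℤ) - (L : ℤ)) ≠ 0) :
    (bandPoly c L D).natDegree = D := by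
  refine le_antisymm (bandPoly_natDegree_le c L D) ?_
  refine Polynomial.le_natDegree_of_ne_zero ?_
  rw [bandPoly_coeff, if_pos le_rfl]
  exact h

lemma bandPoly_ne_zero (c : ℤ → F) (L D : ℕ) (h : c ((D : ℤ) - (L : ℤ)) ≠ 0) :
    bandPoly c L D ≠ 0 := fun h0 => by
  have := bandPoly_coeff c L D D
  rw [h0, if_pos le_rfl] at this
  exact h (by simpa using this.symm)

lemma bandPoly_aeval_apply (c : ℤ → F) (L D : ℕ) (v : ℕ → F) (s : ℕ) :
    ((Polynomial.aeval (shiftE F) (bandPoly c L D)) v) s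
      = ∑ t ∈ Finset.range (D + 1), c ((t : ℤ) - (L : ℤ)) * v (s + t) := by
  rw [aeval_shiftE_apply _ (D + 1) (Nat.lt_succ_of_le (bandPoly_natDegree_le c L D))]
  refine Finset.sum_congr rfl fun t ht => ?_
  rw [bandPoly_coeff, if_pos (Nat.lt_succ_iff.mp (Finset.mem_range.mp ht))]

/-- Reversal of the band polynomial. -/
lemma bandPoly_reverse (c : ℤ → F) (L R : ℕ) (h : c ((R : ℤ)) ≠ 0) :
    (bandPoly c L (L + R)).reverse = bandPoly (fun t => c (-t)) R (L + R) := by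
  have hdeg : (bandPoly c L (L + R)).natDegree = L + R := by
    refine bandPoly_natDegree c L (L + R) ?_
    have : ((L + R : ℕ) : ℤ) - (L : ℤ) = (R : ℤ) := by push_cast; ring
    rw [this]; exact h
  ext t
  rw [Polynomial.coeff_reverse, hdeg, bandPoly_coeff]
  by_cases ht : t ≤ L + R
  · rw [Polynomial.revAt_le ht, bandPoly_coeff, if_pos (Nat.sub_le _ _), if_pos ht]
    congr 1
    push_cast [Nat.cast_sub ht]
    ring
  · rw [show Polynomial.revAt (L + R) t = t from Polynomial.revAt_eq_self_of_lt (by omega)]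
    rw [if_neg ht, bandPoly_coeff, if_neg ht]

lemma reverse_dvd_X_pow_sub_one {P : ℕ} (hP : 0 < P) {g : F[X]}
    (hg : g ∣ X ^ P - 1) : g.reverse ∣ X ^ P - 1 := by
  obtain ⟨h, hh⟩ := hg
  have hrev : (X ^ P - 1 : F[X]).reverse = 1 - X ^ P := by
    have hdegX : (X ^ P - 1 : F[X]).natDegree = P := by
      have := Polynomial.natDegree_X_pow_sub_C (n := P) (r := (1 : F))
      simpa using this
    rw [Polynomial.reverse, hdegX]
    rw [show (X ^ P - 1 : F[X]) = X ^ P - X ^ 0 by simp]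
    rw [Polynomial.reflect_sub, Polynomial.reflect_monomial, Polynomial.reflect_monomial]
    rw [Polynomial.revAt_le le_rfl, Polynomial.revAt_le (Nat.zero_le _)]
    simp
  have : (X ^ P - 1 : F[X]).reverse = g.reverse * h.reverse := by
    rw [hh, Polynomial.reverse_mul_of_domain]
  rw [hrev] at this
  have : g.reverse ∣ (1 - X ^ P : F[X]) := Dvd.intro _ this.symm
  have := this.neg_right
  simpa using this

end BTAux

noncomputable section BTMat

open Polynomial

variable {F : Type*} [Field F]

/-- The zero-extended inverse-matrix entries (0-indexed). -/
def entE (n : ℕ) (M : Matrix (Fin n) (Fin n) F) : ℕ → ℕ → F :=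
  fun i j => if h : i < n ∧ j < n then M⁻¹ ⟨i, h.1⟩ ⟨j, h.2⟩ else 0

lemma entE_eq {n : ℕ} (M : Matrix (Fin n) (Fin n) F) {i j : ℕ} (hi : i < n) (hj : j < n) :
    entE n M i j = M⁻¹ ⟨i, hi⟩ ⟨j, hj⟩ := dif_pos ⟨hi, hj⟩

lemma entE_zero {n : ℕ} (M : Matrix (Fin n) (Fin n) F) {i j : ℕ} (h : ¬(i < n ∧ j < n)) :
    entE n M i j = 0 := dif_neg h

lemma colrec (n L R : ℕ) (c : ℤ → F)
    (hc0 : ∀ t : ℤ, (t < -(L : ℤ) ∨ (R : ℤ) < t) → c t = 0)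
    (M : Matrix (Fin n) (Fin n) F)
    (hM : ∀ i j : Fin n, M i j = c ((j : ℤ) - (i : ℤ)))
    (hMinv : IsUnit M.det)
    (j s : ℕ) (hj : j < n) (hs : s + L < n) (hne : s + L ≠ j) :
    ((Polynomial.aeval (shiftE F) (bandPoly c L (L + R))) (fun i => entE n M i j)) s = 0 := by
  rw [bandPoly_aeval_apply]
  set G : ℕ → F := fun k => c ((k : ℤ) - ((s + L : ℕ) : ℤ)) * entE n M k j with hG
  have hterm : ∀ t ∈ Finset.range (L + R + 1),
      c ((t : ℤ) - (L : ℤ)) * entE n M (s + t) j = G (s + t) := by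
    intro t _
    simp only [hG]
    congr 2
    push_cast
    ring
  rw [Finset.sum_congr rfl hterm]
  have h2 : ∑ t ∈ Finset.range (L + R + 1), G (s + t)
      = ∑ k ∈ Finset.Ico s (s + (L + R + 1)), G k := by
    rw [Finset.sum_Ico_eq_sum_range]
    simp
  rw [h2]
  have e1 : ∑ k ∈ Finset.Ico s (s + (L + R + 1)), G k
      = ∑ k ∈ Finset.Ico s (s + (L + R + 1)) ∩ Finset.range n, G k := by
    refine (Finset.sum_subset Finset.inter_subset_left fun k hk hk2 => ?_).symm
    have hkn : ¬ k < n := fun h => hk2 (Finset.mem_inter.mpr ⟨hk, Finset.mem_range.mpr h⟩)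
    simp only [hG]
    rw [entE_zero M (fun h => hkn h.1), mul_zero]
  have e2 : ∑ k ∈ Finset.range n, G k
      = ∑ k ∈ Finset.Ico s (s + (L + R + 1)) ∩ Finset.range n, G k := by
    refine (Finset.sum_subset Finset.inter_subset_right fun k hk hk2 => ?_).symm
    have hkI : k ∉ Finset.Ico s (s + (L + R + 1)) :=
      fun h => hk2 (Finset.mem_inter.mpr ⟨h, hk⟩)
    rw [Finset.mem_Ico, not_and_or, not_le, not_lt] at hkI
    have hc : c ((k : ℤ) - ((s + L : ℕ) : ℤ)) = 0 := by
      apply hc0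
      rcases hkI with h | h
      · left; push_cast; omega
      · right; push_cast; omega
    simp only [hG]
    rw [hc, zero_mul]
  rw [e1, ← e2]
  have h4 : ∑ k ∈ Finset.range n, G k = (M * M⁻¹) ⟨s + L, hs⟩ ⟨j, hj⟩ := by
    rw [Matrix.mul_apply, ← Fin.sum_univ_eq_sum_range (fun k => G k) n]
    refine Finset.sum_congr rfl fun k _ => ?_
    show G k.val = M ⟨s + L, hs⟩ k * M⁻¹ k ⟨j, hj⟩
    simp only [hG]
    rw [entE_eq M k.isLt hj, hM]
  rw [h4, Matrix.mul_nonsing_inv M hMinv]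
  refine Matrix.one_apply_ne fun hEq => hne ?_
  simpa using congrArg Fin.val hEq

lemma rowrec (n L R : ℕ) (c : ℤ → F)
    (hc0 : ∀ t : ℤ, (t < -(L : ℤ) ∨ (R : ℤ) < t) → c t = 0)
    (M : Matrix (Fin n) (Fin n) F)
    (hM : ∀ i j : Fin n, M i j = c ((j : ℤ) - (i : ℤ)))
    (hMinv : IsUnit M.det)
    (i s : ℕ) (hi : i < n) (hs : s + R < n) (hne : s + R ≠ i) :
    ((Polynomial.aeval (shiftE F) (bandPoly (fun t => c (-t)) R (L + R)))
      (fun j => entE n M i j)) s = 0 := by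
  rw [bandPoly_aeval_apply]
  set G : ℕ → F := fun k => c (((s + R : ℕ) : ℤ) - (k : ℤ)) * entE n M i k with hG
  have hterm : ∀ t ∈ Finset.range (L + R + 1),
      (fun t' : ℤ => c (-t')) ((t : ℤ) - (R : ℤ)) * entE n M i (s + t) = G (s + t) := by
    intro t _
    simp only [hG]
    congr 2
    push_cast
    ring
  rw [Finset.sum_congr rfl hterm]
  have h2 : ∑ t ∈ Finset.range (L + R + 1), G (s + t)
      = ∑ k ∈ Finset.Ico s (s + (L + R + 1)), G k := by
    rw [Finset.sum_Ico_eq_sum_range]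
    simp
  rw [h2]
  have e1 : ∑ k ∈ Finset.Ico s (s + (L + R + 1)), G k
      = ∑ k ∈ Finset.Ico s (s + (L + R + 1)) ∩ Finset.range n, G k := by
    refine (Finset.sum_subset Finset.inter_subset_left fun k hk hk2 => ?_).symm
    have hkn : ¬ k < n := fun h => hk2 (Finset.mem_inter.mpr ⟨hk, Finset.mem_range.mpr h⟩)
    simp only [hG]
    rw [entE_zero M (fun h => hkn h.2), mul_zero]
  have e2 : ∑ k ∈ Finset.range n, G k
      = ∑ k ∈ Finset.Ico s (s + (L + R + 1)) ∩ Finset.range n, G k := by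
    refine (Finset.sum_subset Finset.inter_subset_right fun k hk hk2 => ?_).symm
    have hkI : k ∉ Finset.Ico s (s + (L + R + 1)) :=
      fun h => hk2 (Finset.mem_inter.mpr ⟨h, hk⟩)
    rw [Finset.mem_Ico, not_and_or, not_le, not_lt] at hkI
    have hc : c (((s + R : ℕ) : ℤ) - (k : ℤ)) = 0 := by
      apply hc0
      rcases hkI with h | h
      · right; push_cast; omega
      · left; push_cast; omega
    simp only [hG]
    rw [hc, zero_mul]
  rw [e1, ← e2]
  have h4 : ∑ k ∈ Finset.range n, G k = (M⁻¹ * M) ⟨i, hi⟩ ⟨s + R, hs⟩ := by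
    rw [Matrix.mul_apply, ← Fin.sum_univ_eq_sum_range (fun k => G k) n]
    refine Finset.sum_congr rfl fun k _ => ?_
    show G k.val = M⁻¹ ⟨i, hi⟩ k * M k ⟨s + R, hs⟩
    simp only [hG]
    rw [entE_eq M hi k.isLt, hM, mul_comm]
  rw [h4, Matrix.nonsing_inv_mul M hMinv]
  refine Matrix.one_apply_ne fun hEq => hne ?_
  have := congrArg Fin.val hEq
  simpa using this.symm

lemma colper (n L R P : ℕ) (c : ℤ → F)
    (hc0 : ∀ t : ℤ, (t < -(L : ℤ) ∨ (R : ℤ) < t) → c t = 0)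
    (hcR : c (R : ℤ) ≠ 0)
    (hdvd : bandPoly c L (L + R) ∣ X ^ P - 1) (hP0 : 0 < P) (hDP : L + R ≤ P)
    (M : Matrix (Fin n) (Fin n) F)
    (hM : ∀ i j : Fin n, M i j = c ((j : ℤ) - (i : ℤ)))
    (hMinv : IsUnit M.det)
    (j s : ℕ) (hj : j < n) (hjs : j < s + L) (hsn : s + P < n + R) :
    entE n M (s + P) j = entE n M s j := by
  have htop : c (((L + R : ℕ) : ℤ) - (L : ℤ)) ≠ 0 := by
    have : ((L + R : ℕ) : ℤ) - (L : ℤ) = (R : ℤ) := by push_cast; ring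
    rw [this]; exact hcR
  have hfd : (bandPoly c L (L + R)).natDegree = L + R := bandPoly_natDegree c L (L + R) htop
  refine shift_period P hP0 _ (bandPoly_ne_zero c L (L + R) htop) hdvd
    (fun i => entE n M i j) s fun k hk => ?_
  rw [hfd] at hk
  exact colrec n L R c hc0 M hM hMinv j (s + k) hj (by omega) (by omega)

lemma rowper (n L R P : ℕ) (c : ℤ → F)
    (hc0 : ∀ t : ℤ, (t < -(L : ℤ) ∨ (R : ℤ) < t) → c t = 0)
    (hcL : c (-(L : ℤ)) ≠ 0)
    (hdvd : bandPoly (fun t => c (-t)) R (L + R) ∣ X ^ P - 1) (hP0 : 0 < P) (hDP : L + R ≤ P)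
    (M : Matrix (Fin n) (Fin n) F)
    (hM : ∀ i j : Fin n, M i j = c ((j : ℤ) - (i : ℤ)))
    (hMinv : IsUnit M.det)
    (i s : ℕ) (hi : i < n) (his : s + P < i + L) (hsn : s + P < n + L) :
    entE n M i (s + P) = entE n M i s := by
  have htop : (fun t : ℤ => c (-t)) (((L + R : ℕ) : ℤ) - (R : ℤ)) ≠ 0 := by
    have : -(((L + R : ℕ) : ℤ) - (R : ℤ)) = -(L : ℤ) := by push_cast; ring
    simpa only [this] using hcL
  have hfd : (bandPoly (fun t : ℤ => c (-t)) R (L + R)).natDegree = L + R :=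
    bandPoly_natDegree _ R (L + R) htop
  refine shift_period P hP0 _ (bandPoly_ne_zero _ R (L + R) htop) hdvd
    (fun j => entE n M i j) s fun k hk => ?_
  rw [hfd] at hk
  exact rowrec n L R c hc0 M hM hMinv i (s + k) hi (by omega) (by omega)

lemma colchain (n L R P : ℕ) (c : ℤ → F)
    (hc0 : ∀ t : ℤ, (t < -(L : ℤ) ∨ (R : ℤ) < t) → c t = 0)
    (hcR : c (R : ℤ) ≠ 0)
    (hdvd : bandPoly c L (L + R) ∣ X ^ P - 1) (hP0 : 0 < P) (hDP : L + R ≤ P)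
    (M : Matrix (Fin n) (Fin n) F)
    (hM : ∀ i j : Fin n, M i j = c ((j : ℤ) - (i : ℤ)))
    (hMinv : IsUnit M.det)
    (m s j : ℕ) (hj : j < n) (hjs : j < s + L) (hsn : s + m * P < n + R) :
    entE n M (s + m * P) j = entE n M s j := by
  induction m with
  | zero => simp
  | succ m ih =>
    obtain ⟨u, hu⟩ : ∃ u, m * P = u := ⟨_, rfl⟩
    rw [Nat.succ_mul, hu] at hsn ⊢
    rw [hu] at ih
    rw [← add_assoc]
    rw [colper n L R P c hc0 hcR hdvd hP0 hDP M hM hMinv j (s + u) hj (by omega) (by omega)]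
    exact ih (by omega)

lemma rowchain (n L R P : ℕ) (c : ℤ → F)
    (hc0 : ∀ t : ℤ, (t < -(L : ℤ) ∨ (R : ℤ) < t) → c t = 0)
    (hcL : c (-(L : ℤ)) ≠ 0)
    (hdvd : bandPoly (fun t => c (-t)) R (L + R) ∣ X ^ P - 1) (hP0 : 0 < P) (hDP : L + R ≤ P)
    (M : Matrix (Fin n) (Fin n) F)
    (hM : ∀ i j : Fin n, M i j = c ((j : ℤ) - (i : ℤ)))
    (hMinv : IsUnit M.det)
    (m s i : ℕ) (hi : i < n) (his : s + m * P < i + L) (hsn : s + m * P < n + L) :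
    entE n M i (s + m * P) = entE n M i s := by
  induction m with
  | zero => simp
  | succ m ih =>
    obtain ⟨u, hu⟩ : ∃ u, m * P = u := ⟨_, rfl⟩
    rw [Nat.succ_mul, hu] at hsn his ⊢
    rw [hu] at ih
    rw [← add_assoc]
    rw [rowper n L R P c hc0 hcL hdvd hP0 hDP M hM hMinv i (s + u) hi (by omega) (by omega)]
    exact ih (by omega) (by omega)

end BTMat

noncomputable section BTMain

open Polynomial

variable {F : Type*} [Field F]

lemma stageAll (n L R P : ℕ) (c : ℤ → F)
    (hc0 : ∀ t : ℤ, (t < -(L : ℤ) ∨ (R : ℤ) < t) → c t = 0)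
    (hcL : c (-(L : ℤ)) ≠ 0) (hcR : c (R : ℤ) ≠ 0)
    (hdvd : bandPoly c L (L + R) ∣ X ^ P - 1)
    (hdvd' : bandPoly (fun t => c (-t)) R (L + R) ∣ X ^ P - 1)
    (hP0 : 0 < P) (hDP : L + R ≤ P)
    (M : Matrix (Fin n) (Fin n) F)
    (hM : ∀ i j : Fin n, M i j = c ((j : ℤ) - (i : ℤ)))
    (hMinv : IsUnit M.det)
    (J' k u w a' b' : ℕ) (hu : J' * P = u) (hw : k * P = w)
    (ha' : a' < P) (hb' : b' < P) (hun : u + P + a' + w < n) :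
    entE n M (u + P + a' + w) (u + b') = entE n M (P + a') b' := by
  have sA := colchain n L R P c hc0 hcR hdvd hP0 hDP M hM hMinv
    k (u + P + a') (u + b') (by omega) (by omega) (by rw [hw]; omega)
  rw [hw] at sA
  have sB := rowchain n L R P c hc0 hcL hdvd' hP0 hDP M hM hMinv
    J' b' (u + P + a') (by omega) (by rw [hu]; omega) (by rw [hu]; omega)
  rw [hu] at sB
  have sC := colchain n L R P c hc0 hcR hdvd hP0 hDP M hM hMinv
    J' (P + a') b' (by omega) (by omega) (by rw [hu]; omega)
  rw [hu] at sC
  rw [sA, show u + b' = b' + u from by omega, sB,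
    show u + P + a' = P + a' + u from by omega, sC]

end BTMain

/-- All `P×P` blocks of `M_n⁻¹` strictly below the diagonal equal `B_{2,1}`,
and the partial blocks in the last block-row equal the upper
`n - P⌊n/P⌋` rows of `B_{2,1}`. -/
theorem banded_toeplitz_inv_blocks_below_diagonal
    (p : ℕ) [Fact p.Prime] (L R : ℕ) (hL : 1 ≤ L) (hR : 1 ≤ R)
    (c : ℤ → ZMod p) (hcL : c (-(L : ℤ)) ≠ 0) (hcR : c (R : ℤ) ≠ 0)
    (hc0 : ∀ t : ℤ, (t < -(L : ℤ) ∨ (R : ℤ) < t) → c t = 0)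
    (f : Polynomial (ZMod p))
    (hf : f = ∑ t ∈ Finset.range (L + R + 1), C (c ((t : ℤ) - (L : ℤ))) * X ^ t)
    (P : ℕ) (hP : IsLeast {q : ℕ | 0 < q ∧ f ∣ (X ^ q - 1)} P)
    (n : ℕ) (hn : 1 ≤ n)
    (M : Matrix (Fin n) (Fin n) (ZMod p))
    (hM : ∀ i j : Fin n, M i j = c ((j : ℤ) - (i : ℤ)))
    (hMinv : IsUnit M.det)
    -- `x i j` is the `(i,j)` entry (1-indexed) of `M⁻¹`
    (x : ℕ → ℕ → ZMod p)
    (hx : ∀ (i j : ℕ) (hi : i < n) (hj : j < n), x (i + 1) (j + 1) = M⁻¹ ⟨i, hi⟩ ⟨j, hj⟩) :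
    (∀ I J a b : ℕ, 1 ≤ J → J < I → I ≤ n / P → 1 ≤ a → a ≤ P → 1 ≤ b → b ≤ P →
      x ((I - 1) * P + a) ((J - 1) * P + b) = x (P + a) b) ∧
    (¬ P ∣ n → ∀ J a b : ℕ, 1 ≤ J → J ≤ n / P → 1 ≤ a → a ≤ n - P * (n / P) →
      1 ≤ b → b ≤ P →
      x (P * (n / P) + a) ((J - 1) * P + b) = x (P + a) b) := by
  have hP0 : 0 < P := hP.1.1
  have hfb : f = bandPoly c L (L + R) := hf
  have hdvd : bandPoly c L (L + R) ∣ X ^ P - 1 := hfb ▸ hP.1.2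
  have htop : c (((L + R : ℕ) : ℤ) - (L : ℤ)) ≠ 0 := by
    have h' : ((L + R : ℕ) : ℤ) - (L : ℤ) = (R : ℤ) := by push_cast; ring
    rw [h']; exact hcR
  have hXne : (X ^ P - 1 : (ZMod p)[X]) ≠ 0 := by
    simpa using Polynomial.X_pow_sub_C_ne_zero hP0 (1 : ZMod p)
  have hDP : L + R ≤ P := by
    have h1 := Polynomial.natDegree_le_of_dvd hdvd hXne
    rw [bandPoly_natDegree c L (L + R) htop] at h1
    have h2 : (X ^ P - 1 : (ZMod p)[X]).natDegree = P := by
      simpa using Polynomial.natDegree_X_pow_sub_C (n := P) (r := (1 : ZMod p))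
    omega
  have hdvd' : bandPoly (fun t => c (-t)) R (L + R) ∣ X ^ P - 1 := by
    rw [← bandPoly_reverse c L R hcR]
    exact reverse_dvd_X_pow_sub_one hP0 hdvd
  have hxe : ∀ (i j : ℕ), i < n → j < n → x (i + 1) (j + 1) = entE n M i j := by
    intro i j hi hj
    rw [hx i j hi hj, entE_eq M hi hj]
  have hqn : n / P * P ≤ n := Nat.div_mul_le_self n P
  constructor
  · intro I J a b hJ1 hJI hIq ha1 haP hb1 hbP
    obtain ⟨J', rfl⟩ : ∃ J', J = J' + 1 := ⟨J - 1, by omega⟩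
    obtain ⟨k, rfl⟩ : ∃ k, I = J' + 1 + 1 + k := ⟨I - (J' + 2), by omega⟩
    obtain ⟨a', rfl⟩ : ∃ a', a = a' + 1 := ⟨a - 1, by omega⟩
    obtain ⟨b', rfl⟩ : ∃ b', b = b' + 1 := ⟨b - 1, by omega⟩
    have s1 : J' + 1 + 1 + k - 1 = J' + 1 + k := by omega
    have s2 : J' + 1 - 1 = J' := by omega
    rw [s1, s2]
    have hun : J' * P + P + a' + k * P < n := by
      have h1 : (J' + 2 + k) * P ≤ n / P * P :=
        Nat.mul_le_mul_right P (by omega)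
      have h2 : (J' + 2 + k) * P = J' * P + k * P + P + P := by ring
      rw [h2] at h1
      omega
    have key := stageAll n L R P c hc0 hcL hcR hdvd hdvd' hP0 hDP M hM hMinv
      J' k (J' * P) (k * P) a' b' rfl rfl (by omega) (by omega) hun
    have r1 : (J' + 1 + k) * P + (a' + 1) = (J' * P + P + a' + k * P) + 1 := by ring
    have r2 : J' * P + (b' + 1) = (J' * P + b') + 1 := by ring
    have r3 : P + (a' + 1) = (P + a') + 1 := by ring
    rw [r1, r2, r3]
    rw [hxe _ _ (by omega) (by omega), hxe _ _ (by omega) (by omega)]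
    exact key
  · intro _ J a b hJ1 hJq ha1 han hb1 hbP
    have hdm : P * (n / P) + n % P = n := Nat.div_add_mod n P
    have hm : n % P < P := Nat.mod_lt n hP0
    obtain ⟨J', rfl⟩ : ∃ J', J = J' + 1 := ⟨J - 1, by omega⟩
    obtain ⟨k, hk⟩ : ∃ k, n / P = J' + 1 + k := ⟨n / P - (J' + 1), by omega⟩
    obtain ⟨a', rfl⟩ : ∃ a', a = a' + 1 := ⟨a - 1, by omega⟩
    obtain ⟨b', rfl⟩ : ∃ b', b = b' + 1 := ⟨b - 1, by omega⟩
    have s2 : J' + 1 - 1 = J' := by omega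
    rw [s2, hk]
    have hun : J' * P + P + a' + k * P < n := by
      have h1 : P * (n / P) + (a' + 1) ≤ n := by
        have hlt : P * (n / P) < n := by
          rcases Nat.lt_or_ge (P * (n / P)) n with h | h
          · exact h
          · exfalso
            have : n - P * (n / P) = 0 := by omega
            omega
        omega
      rw [hk] at h1
      have h2 : P * (J' + 1 + k) = J' * P + k * P + P := by ring
      rw [h2] at h1
      omega
    have key := stageAll n L R P c hc0 hcL hcR hdvd hdvd' hP0 hDP M hM hMinv
      J' k (J' * P) (k * P) a' b' rfl rfl (by omega) (by omega) hun
    have r1 : P * (J' + 1 + k) + (a' + 1) = (J' * P + P + a' + k * P) + 1 := by ring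
    have r2 : J' * P + (b' + 1) = (J' * P + b') + 1 := by ring
    have r3 : P + (a' + 1) = (P + a') + 1 := by ring
    rw [r1, r2, r3]
    rw [hxe _ _ (by omega) (by omega), hxe _ _ (by omega) (by omega)]
    exact key
end

section
/- Suppose M_n is invertible and set P = P(f), writing X = M_n^{-1}. Then all P×P diagonal blocks of X are equal to the top-left block B_{1,1}: for all block indices 1 ≤ I ≤ ⌊n/P⌋ and all 1 ≤ a, b ≤ P, X_{(I−1)P+a, (I−1)P+b} = X_{a, b}. Moreover, if P does not divide n, then with m = n − P⌊n/P⌋, the bottom-right partial diagonal block equals the upper-left m×m submatrix of B_{1,1}: X_{P⌊n/P⌋+a, P⌊n/P⌋+b} = X_{a, b} for all 1 ≤ a, b ≤ m. -/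
open Polynomial

/-- All `P×P` diagonal blocks of `M_n⁻¹` equal `B_{1,1}`, and the bottom-right
partial diagonal block equals the upper-left `m×m` corner of `B_{1,1}`,
where `m = n - P⌊n/P⌋`. -/
theorem banded_toeplitz_inv_blocks_diagonal
    (p : ℕ) [Fact p.Prime] (L R : ℕ) (hL : 1 ≤ L) (hR : 1 ≤ R)
    (c : ℤ → ZMod p) (hcL : c (-(L : ℤ)) ≠ 0) (hcR : c (R : ℤ) ≠ 0)
    (hc0 : ∀ t : ℤ, (t < -(L : ℤ) ∨ (R : ℤ) < t) → c t = 0)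
    (f : Polynomial (ZMod p))
    (hf : f = ∑ t ∈ Finset.range (L + R + 1), C (c ((t : ℤ) - (L : ℤ))) * X ^ t)
    (P : ℕ) (hP : IsLeast {q : ℕ | 0 < q ∧ f ∣ (X ^ q - 1)} P)
    (n : ℕ) (hn : 1 ≤ n)
    (M : Matrix (Fin n) (Fin n) (ZMod p))
    (hM : ∀ i j : Fin n, M i j = c ((j : ℤ) - (i : ℤ)))
    (hMinv : IsUnit M.det)
    -- `x i j` is the `(i,j)` entry (1-indexed) of `M⁻¹`
    (x : ℕ → ℕ → ZMod p)
    (hx : ∀ (i j : ℕ) (hi : i < n) (hj : j < n), x (i + 1) (j + 1) = M⁻¹ ⟨i, hi⟩ ⟨j, hj⟩) :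
    (∀ I a b : ℕ, 1 ≤ I → I ≤ n / P → 1 ≤ a → a ≤ P → 1 ≤ b → b ≤ P →
      x ((I - 1) * P + a) ((I - 1) * P + b) = x a b) ∧
    (¬ P ∣ n → ∀ a b : ℕ, 1 ≤ a → a ≤ n - P * (n / P) → 1 ≤ b → b ≤ n - P * (n / P) →
      x (P * (n / P) + a) (P * (n / P) + b) = x a b) := by
  obtain ⟨⟨hP0, hfdvd⟩, -⟩ := hP
  obtain ⟨g, hg⟩ := hfdvd
  -- coefficients of `f`
  have hfc : ∀ s : ℕ, f.coeff s = c ((s : ℤ) - L) := by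
    intro s
    rw [hf, Polynomial.finset_sum_coeff]
    simp only [Polynomial.coeff_C_mul, Polynomial.coeff_X_pow, mul_ite, mul_one, mul_zero]
    rw [Finset.sum_ite_eq (Finset.range (L + R + 1)) s (fun t => c ((t : ℤ) - L))]
    split_ifs with h
    · rfl
    · refine (hc0 _ (Or.inr ?_)).symm
      simp only [Finset.mem_range] at h
      omega
  have hfne : f ≠ 0 := by
    intro h
    apply hcL
    have h0 := hfc 0
    rw [h] at h0
    simpa using h0.symm
  have hdegf : f.natDegree = L + R := by
    apply le_antisymm
    · rw [Polynomial.natDegree_le_iff_coeff_eq_zero]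
      intro m hm
      rw [hfc]
      exact hc0 _ (Or.inr (by omega))
    · apply Polynomial.le_natDegree_of_ne_zero
      rw [hfc]
      have e : ((L + R : ℕ) : ℤ) - L = R := by push_cast; ring
      rw [e]; exact hcR
  have hXP : (X ^ P - 1 : (ZMod p)[X]).natDegree = P := by
    rw [← Polynomial.C_1]
    exact Polynomial.natDegree_X_pow_sub_C
  have hgne : g ≠ 0 := by
    intro h
    rw [h, mul_zero] at hg
    have h5 : (X ^ P - 1 : (ZMod p)[X]).coeff 0 = 0 := by rw [hg]; simp
    rw [Polynomial.coeff_sub, Polynomial.coeff_X_pow, Polynomial.coeff_one] at h5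
    simp only [if_neg (by omega : ¬ (0 = P)), if_pos rfl, zero_sub, neg_eq_zero] at h5
    exact one_ne_zero h5
  set D := g.natDegree with hDdef
  have hD : L + R + D = P := by
    have h1 : (f * g).natDegree = f.natDegree + g.natDegree := Polynomial.natDegree_mul hfne hgne
    rw [← hg, hXP, hdegf] at h1
    omega
  -- the key convolution identity coming from `f * g = X ^ P - 1`
  have hconv : ∀ m : ℤ, (∑ u ∈ Finset.range (D + 1), g.coeff u * c (m - L - u)) =
      (if m = (P : ℤ) then 1 else 0) - (if m = 0 then 1 else 0) := by
    intro m
    rcases lt_or_ge m 0 with hm | hm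
    · rw [Finset.sum_eq_zero, if_neg (by omega), if_neg (by omega), sub_zero]
      intro u _
      rw [hc0 _ (Or.inl (by omega)), mul_zero]
    · obtain ⟨N, rfl⟩ : ∃ N : ℕ, m = (N : ℤ) := ⟨m.toNat, (Int.toNat_of_nonneg hm).symm⟩
      rcases le_or_gt (N : ℕ) P with hNP | hNP
      · have step1 : (∑ u ∈ Finset.range (D + 1), g.coeff u * c ((N : ℤ) - L - u)) =
            ∑ u ∈ Finset.range (P + 1), g.coeff u * c ((N : ℤ) - L - u) := by
          apply Finset.sum_subset (Finset.range_subset_range.2 (by omega))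
          intro u _ hu
          rw [Polynomial.coeff_eq_zero_of_natDegree_lt, zero_mul]
          simp only [Finset.mem_range] at hu
          omega
        have step2 : (∑ u ∈ Finset.range (P + 1), g.coeff u * c ((N : ℤ) - L - u)) =
            ∑ u ∈ Finset.range (P + 1), g.coeff u * (if u ≤ N then f.coeff (N - u) else 0) := by
          refine Finset.sum_congr rfl fun u _ => ?_
          split_ifs with h
          · rw [hfc]
            congr 1
            push_cast [Nat.cast_sub h]
            ring
          · rw [hc0 _ (Or.inl (by omega)), mul_zero]
        have step3 : (∑ u ∈ Finset.range (P + 1),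
              g.coeff u * (if u ≤ N then f.coeff (N - u) else 0)) =
            ∑ u ∈ Finset.range (N + 1), g.coeff u * f.coeff (N - u) := by
          rw [← Finset.sum_subset (Finset.range_subset_range.2 (by omega : N + 1 ≤ P + 1))]
          · refine Finset.sum_congr rfl fun u hu => ?_
            rw [if_pos]
            simp only [Finset.mem_range] at hu
            omega
          · intro u _ hu
            simp only [Finset.mem_range] at hu
            rw [if_neg (by omega), mul_zero]
        rw [step1, step2, step3]
        have step4 : (∑ u ∈ Finset.range (N + 1), g.coeff u * f.coeff (N - u)) =
            (g * f).coeff N := by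
          rw [Polynomial.coeff_mul, Finset.Nat.sum_antidiagonal_eq_sum_range_succ_mk]
        rw [step4, mul_comm, ← hg, Polynomial.coeff_sub, Polynomial.coeff_X_pow,
          Polynomial.coeff_one]
        congr 1
        · split_ifs with h1 h2 h2 <;> first | rfl | (exfalso; omega)
        · split_ifs with h1 h2 h2 <;> first | rfl | (exfalso; omega)
      · rw [Finset.sum_eq_zero, if_neg (by omega), if_neg (by omega), sub_zero]
        intro u hu
        simp only [Finset.mem_range] at hu
        rw [hc0 _ (Or.inr (by omega)), mul_zero]
  -- rows and columns of `M * M⁻¹ = 1` and `M⁻¹ * M = 1`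
  have hrow : ∀ l j : Fin n, (∑ k : Fin n, c (((k:ℕ) : ℤ) - ((l:ℕ) : ℤ)) * M⁻¹ k j) =
      if l = j then (1 : ZMod p) else 0 := by
    intro l j
    have h1 := Matrix.mul_nonsing_inv M hMinv
    have h2 : (M * M⁻¹) l j = (1 : Matrix (Fin n) (Fin n) (ZMod p)) l j := by rw [h1]
    rw [Matrix.mul_apply, Matrix.one_apply] at h2
    simpa only [hM] using h2
  have hcol : ∀ i l : Fin n, (∑ k : Fin n, M⁻¹ i k * c (((l:ℕ) : ℤ) - ((k:ℕ) : ℤ))) =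
      if i = l then (1 : ZMod p) else 0 := by
    intro i l
    have h1 := Matrix.nonsing_inv_mul M hMinv
    have h2 : (M⁻¹ * M) i l = (1 : Matrix (Fin n) (Fin n) (ZMod p)) i l := by rw [h1]
    rw [Matrix.mul_apply, Matrix.one_apply] at h2
    simpa only [hM] using h2
  -- the fundamental shift invariance of the inverse matrix
  have key0 : ∀ (i j : ℕ) (hi : i + P < n) (hj : j + P < n) (hi' : i < n) (hj' : j < n),
      M⁻¹ ⟨i + P, hi⟩ ⟨j + P, hj⟩ = M⁻¹ ⟨i, hi'⟩ ⟨j, hj'⟩ := by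
    intro i j hi hj hi' hj'
    set S : ZMod p := ∑ u ∈ Finset.range (D + 1), g.coeff u *
        (if i + L + u = j + P then (1 : ZMod p) else 0) with hS
    have hA : M⁻¹ ⟨i + P, hi⟩ ⟨j + P, hj⟩ - M⁻¹ ⟨i, hi'⟩ ⟨j + P, hj⟩ = S := by
      have step1 : S = ∑ u ∈ Finset.range (D + 1), ∑ k : Fin n,
          g.coeff u * (c (((k:ℕ) : ℤ) - ((i : ℤ) + L + u)) * M⁻¹ k ⟨j + P, hj⟩) := by
        rw [hS]
        refine Finset.sum_congr rfl fun u hu => ?_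
        have hu' : u ≤ D := by simpa [Nat.lt_succ_iff] using Finset.mem_range.mp hu
        have hlt : i + L + u < n := by omega
        rw [← Finset.mul_sum]
        congr 1
        have h3 := hrow ⟨i + L + u, hlt⟩ ⟨j + P, hj⟩
        rw [show (((⟨i + L + u, hlt⟩ : Fin n) : ℕ) : ℤ) = (i : ℤ) + L + u by
          push_cast; ring] at h3
        rw [h3]
        simp only [Fin.mk.injEq]
      have step2 : S = ∑ k : Fin n,
          ((∑ u ∈ Finset.range (D + 1), g.coeff u * c ((((k:ℕ) : ℤ) - i) - L - u))
            * M⁻¹ k ⟨j + P, hj⟩) := by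
        rw [step1, Finset.sum_comm]
        refine Finset.sum_congr rfl fun k _ => ?_
        rw [Finset.sum_mul]
        refine Finset.sum_congr rfl fun u _ => ?_
        rw [mul_assoc, show (((k:ℕ) : ℤ) - i) - L - u = ((k:ℕ) : ℤ) - ((i : ℤ) + L + u) by ring]
      rw [step2]
      have step3 : ∀ k : Fin n,
          ((∑ u ∈ Finset.range (D + 1), g.coeff u * c ((((k:ℕ) : ℤ) - i) - L - u))
            * M⁻¹ k ⟨j + P, hj⟩) =
          ((if k = (⟨i + P, hi⟩ : Fin n) then (1:ZMod p) else 0)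
            - (if k = (⟨i, hi'⟩ : Fin n) then 1 else 0)) * M⁻¹ k ⟨j + P, hj⟩ := by
        intro k
        rw [hconv]
        congr 2
        · refine if_congr ?_ rfl rfl
          simp only [Fin.ext_iff, Fin.val_mk]
          constructor <;> intro h <;> omega
        · refine if_congr ?_ rfl rfl
          simp only [Fin.ext_iff, Fin.val_mk]
          constructor <;> intro h <;> omega
      rw [Finset.sum_congr rfl fun k _ => step3 k]
      simp only [sub_mul, ite_mul, one_mul, zero_mul, Finset.sum_sub_distrib,
        Finset.sum_ite_eq', Finset.mem_univ, if_true]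
    have hB : M⁻¹ ⟨i, hi'⟩ ⟨j, hj'⟩ - M⁻¹ ⟨i, hi'⟩ ⟨j + P, hj⟩ = S := by
      have step1 : S = ∑ u ∈ Finset.range (D + 1), ∑ k : Fin n,
          g.coeff u * (M⁻¹ ⟨i, hi'⟩ k * c (((j : ℤ) + P - ((k:ℕ) : ℤ)) - L - u)) := by
        rw [hS]
        refine Finset.sum_congr rfl fun u hu => ?_
        have hu' : u ≤ D := by simpa [Nat.lt_succ_iff] using Finset.mem_range.mp hu
        have hlt : j + R + (D - u) < n := by omega
        rw [← Finset.mul_sum]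
        congr 1
        have h3 := hcol ⟨i, hi'⟩ ⟨j + R + (D - u), hlt⟩
        have h4 : (∑ k : Fin n, M⁻¹ ⟨i, hi'⟩ k * c (((j : ℤ) + P - ((k:ℕ) : ℤ)) - L - u)) =
            ∑ k : Fin n, M⁻¹ ⟨i, hi'⟩ k *
              c ((((⟨j + R + (D - u), hlt⟩ : Fin n) : ℕ) : ℤ) - ((k:ℕ) : ℤ)) := by
          refine Finset.sum_congr rfl fun k _ => ?_
          congr 2
          push_cast [Fin.val_mk, Nat.cast_sub hu']
          omega
        rw [h4, h3]
        refine if_congr ?_ rfl rfl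
        simp only [Fin.ext_iff, Fin.val_mk]
        constructor <;> intro h <;> omega
      have step2 : S = ∑ k : Fin n,
          (M⁻¹ ⟨i, hi'⟩ k *
            ∑ u ∈ Finset.range (D + 1), g.coeff u * c (((j : ℤ) + P - ((k:ℕ) : ℤ)) - L - u)) := by
        rw [step1, Finset.sum_comm]
        refine Finset.sum_congr rfl fun k _ => ?_
        rw [Finset.mul_sum]
        refine Finset.sum_congr rfl fun u _ => ?_
        rw [mul_left_comm]
      rw [step2]
      have step3 : ∀ k : Fin n,
          (M⁻¹ ⟨i, hi'⟩ k *
            ∑ u ∈ Finset.range (D + 1), g.coeff u * c (((j : ℤ) + P - ((k:ℕ) : ℤ)) - L - u)) =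
          M⁻¹ ⟨i, hi'⟩ k * ((if k = (⟨j, hj'⟩ : Fin n) then (1:ZMod p) else 0)
            - (if k = (⟨j + P, hj⟩ : Fin n) then 1 else 0)) := by
        intro k
        rw [hconv]
        congr 2
        · refine if_congr ?_ rfl rfl
          simp only [Fin.ext_iff, Fin.val_mk]
          constructor <;> intro h <;> omega
        · refine if_congr ?_ rfl rfl
          simp only [Fin.ext_iff, Fin.val_mk]
          constructor <;> intro h <;> omega
      rw [Finset.sum_congr rfl fun k _ => step3 k]
      simp only [mul_sub, mul_ite, mul_one, mul_zero, Finset.sum_sub_distrib,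
        Finset.sum_ite_eq', Finset.mem_univ, if_true]
    exact sub_left_inj.mp (hA.trans hB.symm)
  -- 1-indexed version of the shift invariance
  have key1 : ∀ i j : ℕ, 1 ≤ i → 1 ≤ j → i + P ≤ n → j + P ≤ n →
      x (i + P) (j + P) = x i j := by
    intro i j hi1 hj1 hiP hjP
    obtain ⟨i0, rfl⟩ : ∃ i0, i = i0 + 1 := ⟨i - 1, by omega⟩
    obtain ⟨j0, rfl⟩ : ∃ j0, j = j0 + 1 := ⟨j - 1, by omega⟩
    have hi0P : i0 + P < n := by omega
    have hj0P : j0 + P < n := by omega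
    have hi0 : i0 < n := by omega
    have hj0 : j0 < n := by omega
    have e1 : i0 + 1 + P = (i0 + P) + 1 := by omega
    have e2 : j0 + 1 + P = (j0 + P) + 1 := by omega
    rw [e1, e2, hx (i0 + P) (j0 + P) hi0P hj0P, hx i0 j0 hi0 hj0]
    exact key0 i0 j0 hi0P hj0P hi0 hj0
  -- iterate
  have xper : ∀ k a b : ℕ, 1 ≤ a → 1 ≤ b → k * P + a ≤ n → k * P + b ≤ n →
      x (k * P + a) (k * P + b) = x a b := by
    intro k
    induction k with
    | zero => intro a b _ _ _ _; simp
    | succ k ih =>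
      intro a b ha1 hb1 han hbn
      rw [Nat.succ_mul] at han hbn ⊢
      have e1 : k * P + P + a = (k * P + a) + P := by omega
      have e2 : k * P + P + b = (k * P + b) + P := by omega
      rw [e1, e2, key1 (k * P + a) (k * P + b) (by omega) (by omega) (by omega) (by omega)]
      exact ih a b ha1 hb1 (by omega) (by omega)
  constructor
  · intro I a b hI1 hIn ha1 haP hb1 hbP
    have hIP : I * P ≤ (n / P) * P := Nat.mul_le_mul_right P hIn
    have hdm : n / P * P ≤ n := Nat.div_mul_le_self n P
    have e : (I - 1) * P + P = I * P := by
      have e2 : I - 1 + 1 = I := by omega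
      calc (I - 1) * P + P = (I - 1 + 1) * P := (Nat.succ_mul _ _).symm
        _ = I * P := by rw [e2]
    exact xper (I - 1) a b ha1 hb1 (by omega) (by omega)
  · intro _ a b ha1 ham hb1 hbm
    have hdm : n / P * P ≤ n := Nat.div_mul_le_self n P
    have e : P * (n / P) = (n / P) * P := Nat.mul_comm _ _
    rw [e]
    exact xper (n / P) a b ha1 hb1 (by omega) (by omega)
end
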